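/- arXiv:1512.07439 — 8 statements merged into one kernel-verified Lean document; each statement's English description precedes it below -/
import Mathlib

section
/- Let B be a noetherian algebra and P a finitely generated left B-module. Suppose that for every injective morphism f : K → N of finitely generated right B-modules, the kernel of f ⊗_B P : K ⊗_B P → N ⊗_B P is finite dimensional (i.e., P is almost flat). Then for every morphism f : K → N of finitely generated right B-modules with finite-dimensional kernel, the kernel of f ⊗_B P is finite dimensional. -/
open TensorProduct MulOpposite

/-- The `k`-subspace of `N ⊗[k] P` spanned by the balancing relations
`(n·b) ⊗ p − n ⊗ (b·p)`, used to define the tensor product `N ⊗_B P` of a right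
`B`-module `N` and a left `B`-module `P` over a (noncommutative) `k`-algebra `B`. -/
def balRel (k B : Type) [Field k] [Ring B] [Algebra k B]
    (N P : Type) [AddCommGroup N] [Module Bᵐᵒᵖ N] [Module k N] [IsScalarTower k Bᵐᵒᵖ N]
    [AddCommGroup P] [Module B P] [Module k P] [IsScalarTower k B P] :
    Submodule k (N ⊗[k] P) :=
  Submodule.span k {x | ∃ (n : N) (b : B) (p : P),
    x = (op b • n) ⊗ₜ[k] p - n ⊗ₜ[k] (b • p)}

/-- The tensor product `N ⊗_B P` of a right `B`-module `N` and a left `B`-module `P`,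
realized as the quotient of `N ⊗[k] P` by the balancing relations. -/
abbrev TensorB (k B : Type) [Field k] [Ring B] [Algebra k B]
    (N P : Type) [AddCommGroup N] [Module Bᵐᵒᵖ N] [Module k N] [IsScalarTower k Bᵐᵒᵖ N]
    [AddCommGroup P] [Module B P] [Module k P] [IsScalarTower k B P] :=
  (N ⊗[k] P) ⧸ balRel k B N P

/-- The map `f ⊗_B P : N ⊗_B P → N' ⊗_B P` induced by a morphism of right `B`-modules
`f : N → N'`. -/
noncomputable def tensorMapB (k B : Type) [Field k] [Ring B] [Algebra k B]
    (N N' P : Type) [AddCommGroup N] [Module Bᵐᵒᵖ N] [Module k N] [IsScalarTower k Bᵐᵒᵖ N]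
    [AddCommGroup N'] [Module Bᵐᵒᵖ N'] [Module k N'] [IsScalarTower k Bᵐᵒᵖ N']
    [AddCommGroup P] [Module B P] [Module k P] [IsScalarTower k B P]
    (f : N →ₗ[Bᵐᵒᵖ] N') : TensorB k B N P →ₗ[k] TensorB k B N' P :=
  Submodule.mapQ _ _ (TensorProduct.map (f.restrictScalars k) LinearMap.id) (by
    rw [balRel, Submodule.span_le]
    rintro _ ⟨n, b, p, rfl⟩
    simp only [SetLike.mem_coe, Submodule.mem_comap, map_sub, TensorProduct.map_tmul,
      LinearMap.coe_restrictScalars, LinearMap.id_coe, id_eq, map_smul]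
    exact Submodule.subset_span ⟨f n, b, p, rfl⟩)

private lemma findim_comap {k V W : Type*} [Field k] [AddCommGroup V] [Module k V]
    [AddCommGroup W] [Module k W] (g : V →ₗ[k] W) (S : Submodule k W)
    (h1 : FiniteDimensional k (LinearMap.ker g)) (h2 : FiniteDimensional k S) :
    FiniteDimensional k (S.comap g) := by
  rw [← Submodule.fg_iff_finiteDimensional] at *
  refine Submodule.fg_of_fg_map_of_fg_inf_ker g ?_ ?_
  · rw [Submodule.fg_iff_finiteDimensional] at *
    exact Submodule.finiteDimensional_of_le (Submodule.map_comap_le g S)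
  · rw [Submodule.fg_iff_finiteDimensional] at *
    exact Submodule.finiteDimensional_of_le inf_le_right

lemma tensorMapB_comp (k B : Type) [Field k] [Ring B] [Algebra k B]
    (N N' N'' P : Type) [AddCommGroup N] [Module Bᵐᵒᵖ N] [Module k N] [IsScalarTower k Bᵐᵒᵖ N]
    [AddCommGroup N'] [Module Bᵐᵒᵖ N'] [Module k N'] [IsScalarTower k Bᵐᵒᵖ N']
    [AddCommGroup N''] [Module Bᵐᵒᵖ N''] [Module k N''] [IsScalarTower k Bᵐᵒᵖ N'']
    [AddCommGroup P] [Module B P] [Module k P] [IsScalarTower k B P]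
    (f₁ : N →ₗ[Bᵐᵒᵖ] N') (f₂ : N' →ₗ[Bᵐᵒᵖ] N'') :
    tensorMapB k B N N'' P (f₂.comp f₁) =
      (tensorMapB k B N' N'' P f₂).comp (tensorMapB k B N N' P f₁) := by
  apply LinearMap.ext
  intro x
  obtain ⟨y, rfl⟩ := Submodule.mkQ_surjective _ x
  simp only [tensorMapB, LinearMap.comp_apply, Submodule.mkQ_apply, Submodule.mapQ_apply]
  refine congrArg _ ?_
  conv_rhs => rw [← LinearMap.comp_apply, ← TensorProduct.map_comp]
  rfl

lemma ker_tensorMapB_mkQ_findim (k B : Type) [Field k] [Ring B] [Algebra k B]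
    (K P : Type) [AddCommGroup K] [Module Bᵐᵒᵖ K] [Module k K] [IsScalarTower k Bᵐᵒᵖ K]
    [AddCommGroup P] [Module B P] [Module k P] [IsScalarTower k B P] [Module.Finite B P]
    (V : Submodule Bᵐᵒᵖ K) (hV : FiniteDimensional k (V.restrictScalars k)) :
    FiniteDimensional k (LinearMap.ker (tensorMapB k B K (K ⧸ V) P V.mkQ)) := by
  classical
  set V' : Submodule k K := V.restrictScalars k with hV'
  haveI : FiniteDimensional k V' := hV
  obtain ⟨S, hS⟩ := Module.Finite.fg_top (R := B) (M := P)
  set W : Submodule k P := Submodule.span k (S : Set P) with hW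
  set T : K ⊗[k] P →ₗ[k] (K ⧸ V) ⊗[k] P :=
    TensorProduct.map ((V.mkQ).restrictScalars k) LinearMap.id with hT
  set ι₂ : (V' ⊗[k] W) →ₗ[k] K ⊗[k] P := TensorProduct.map V'.subtype W.subtype with hι₂
  set D : Submodule k (TensorB k B K P) :=
    Submodule.map (balRel k B K P).mkQ (LinearMap.range ι₂) with hD
  have hDfin : FiniteDimensional k D := by
    rw [hD, ← LinearMap.range_comp]
    exact LinearMap.finiteDimensional_range _
  -- the key membership claim
  have key : ∀ q (_ : q ∈ Submodule.span B (S : Set P)), ∀ v : V',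
      (balRel k B K P).mkQ ((v : K) ⊗ₜ[k] q) ∈ D := by
    intro q hq
    induction hq using Submodule.span_induction with
    | mem x hx =>
        intro v
        exact ⟨ι₂ (v ⊗ₜ ⟨x, Submodule.subset_span hx⟩), ⟨_, rfl⟩, by simp [hι₂]⟩
    | zero => intro v; rw [tmul_zero]; exact zero_mem _
    | add x y hx hy ihx ihy =>
        intro v; rw [tmul_add, map_add]; exact add_mem (ihx v) (ihy v)
    | smul b x hx ih =>
        intro v
        have hvb : op b • (v : K) ∈ V := V.smul_mem (op b) v.2
        have heq : (balRel k B K P).mkQ ((v : K) ⊗ₜ[k] (b • x)) =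
            (balRel k B K P).mkQ (((⟨op b • (v : K), hvb⟩ : V') : K) ⊗ₜ[k] x) := by
          rw [Submodule.mkQ_apply, Submodule.mkQ_apply, Submodule.Quotient.eq]
          have h2 : (v : K) ⊗ₜ[k] (b • x) - (op b • (v : K)) ⊗ₜ[k] x =
              -((op b • (v : K)) ⊗ₜ[k] x - (v : K) ⊗ₜ[k] (b • x)) := by abel
          rw [h2]
          exact neg_mem (Submodule.subset_span ⟨(v : K), b, x, rfl⟩)
        rw [heq]
        exact ih _
  -- exactness to identify ker T
  have hexact : Function.Exact (V'.subtype) ((V.mkQ).restrictScalars k) := by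
    rw [LinearMap.exact_iff, Submodule.range_subtype, LinearMap.ker_restrictScalars,
      Submodule.ker_mkQ]
  have hexactT : Function.Exact (LinearMap.rTensor P V'.subtype)
      (LinearMap.rTensor P ((V.mkQ).restrictScalars k)) :=
    Module.Flat.rTensor_exact P hexact
  have hkerT : LinearMap.ker T = LinearMap.range (LinearMap.rTensor P V'.subtype) := by
    have : T = LinearMap.rTensor P ((V.mkQ).restrictScalars k) := rfl
    rw [this, LinearMap.exact_iff.mp hexactT]
  -- now the inclusion
  refine Submodule.finiteDimensional_of_le (S₂ := D) ?_
  intro x hx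
  obtain ⟨y, rfl⟩ := Submodule.mkQ_surjective _ x
  have hy : T y ∈ balRel k B (K ⧸ V) P := by
    rw [LinearMap.mem_ker, tensorMapB, Submodule.mkQ_apply, Submodule.mapQ_apply,
      Submodule.Quotient.mk_eq_zero] at hx
    exact hx
  have hbal : balRel k B (K ⧸ V) P ≤ Submodule.map T (balRel k B K P) := by
    rw [balRel, Submodule.span_le]
    rintro _ ⟨nq, b, p, rfl⟩
    obtain ⟨n, rfl⟩ := V.mkQ_surjective nq
    refine ⟨(op b • n) ⊗ₜ[k] p - n ⊗ₜ[k] (b • p), Submodule.subset_span ⟨n, b, p, rfl⟩, ?_⟩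
    simp [hT]
  have hy2 : y ∈ balRel k B K P ⊔ LinearMap.ker T := by
    rw [← Submodule.comap_map_eq]
    exact hbal hy
  obtain ⟨y₁, h₁, y₂, h₂, rfl⟩ := Submodule.mem_sup.mp hy2
  have hz : (balRel k B K P).mkQ y₁ = 0 := by
    rw [Submodule.mkQ_apply]; exact (Submodule.Quotient.mk_eq_zero _).mpr h₁
  rw [map_add, hz, zero_add]
  rw [hkerT] at h₂
  obtain ⟨w, rfl⟩ := h₂
  -- induction on w
  clear hx hy hy2
  induction w using TensorProduct.induction_on with
  | zero => rw [map_zero, map_zero]; exact zero_mem _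
  | tmul v p =>
      have hp : p ∈ Submodule.span B (S : Set P) := hS ▸ Submodule.mem_top
      simpa using key p hp v
  | add a b iha ihb => rw [map_add, map_add]; exact add_mem iha ihb

/-- Let `B` be a noetherian algebra and `P` a finitely generated left `B`-module which is
almost flat (tensoring with `P` over `B` sends injective maps of finitely generated right
`B`-modules to maps with finite-dimensional kernel).  Then for every morphism `f : K → N` of
finitely generated right `B`-modules with finite-dimensional kernel, the kernel of
`f ⊗_B P` is finite-dimensional. -/
theorem almost_flat_of_almost_injective
    (k B : Type) [Field k] [CharZero k] [Ring B] [Algebra k B]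
    [IsNoetherianRing B] [IsNoetherianRing Bᵐᵒᵖ]
    (P : Type) [AddCommGroup P] [Module B P] [Module k P] [IsScalarTower k B P]
    [Module.Finite B P]
    (hflat : ∀ (K N : Type) [AddCommGroup K] [Module Bᵐᵒᵖ K] [Module k K]
      [IsScalarTower k Bᵐᵒᵖ K] [Module.Finite Bᵐᵒᵖ K]
      [AddCommGroup N] [Module Bᵐᵒᵖ N] [Module k N]
      [IsScalarTower k Bᵐᵒᵖ N] [Module.Finite Bᵐᵒᵖ N]
      (f : K →ₗ[Bᵐᵒᵖ] N), Function.Injective f →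
        FiniteDimensional k (LinearMap.ker (tensorMapB k B K N P f))) :
    ∀ (K N : Type) [AddCommGroup K] [Module Bᵐᵒᵖ K] [Module k K]
      [IsScalarTower k Bᵐᵒᵖ K] [Module.Finite Bᵐᵒᵖ K]
      [AddCommGroup N] [Module Bᵐᵒᵖ N] [Module k N]
      [IsScalarTower k Bᵐᵒᵖ N] [Module.Finite Bᵐᵒᵖ N]
      (f : K →ₗ[Bᵐᵒᵖ] N), FiniteDimensional k (LinearMap.ker f) →
        FiniteDimensional k (LinearMap.ker (tensorMapB k B K N P f)) := by
  intro K N iK1 iK2 iK3 iK4 iK5 iN1 iN2 iN3 iN4 iN5 f hker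
  set V : Submodule Bᵐᵒᵖ K := LinearMap.ker f with hVdef
  have hVfin : FiniteDimensional k (V.restrictScalars k) := hker
  set fbar : (K ⧸ V) →ₗ[Bᵐᵒᵖ] N := V.liftQ f le_rfl with hfbar
  have hinj : Function.Injective fbar :=
    LinearMap.ker_eq_bot.mp (Submodule.ker_liftQ_eq_bot' V f rfl)
  have h1 : FiniteDimensional k (LinearMap.ker (tensorMapB k B (K ⧸ V) N P fbar)) :=
    hflat (K ⧸ V) N fbar hinj
  have h2 : FiniteDimensional k (LinearMap.ker (tensorMapB k B K (K ⧸ V) P V.mkQ)) :=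
    ker_tensorMapB_mkQ_findim k B K P V hVfin
  have hcomp : f = fbar.comp V.mkQ := (Submodule.liftQ_mkQ V f le_rfl).symm
  rw [hcomp, tensorMapB_comp, LinearMap.ker_comp]
  exact findim_comap _ _ h2 h1
end

section
/- Let R and B be noetherian algebras and M a B-R-bimodule finitely generated as a left B-module and as a right R-module. Assume M is faithful as a left B-module (finite dimensionality of N ⊗_B M for finitely generated N implies N is finite dimensional) and almost flat. Then for any right B-module N: N ⊗_B M is a torsion R-module if and only if N is a torsion B-module. Here a module is torsion if every cyclic submodule is finite dimensional. -/
open TensorProduct MulOpposite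

/-- Right multiplication by `r ∈ R` on `N ⊗_B M`, for a `B`-`R`-bimodule `M`. -/
noncomputable def tensorSmulR (k B R : Type) [Field k] [Ring B] [Algebra k B]
    [Ring R] [Algebra k R]
    (N M : Type) [AddCommGroup N] [Module Bᵐᵒᵖ N] [Module k N] [IsScalarTower k Bᵐᵒᵖ N]
    [AddCommGroup M] [Module B M] [Module k M] [IsScalarTower k B M]
    [Module Rᵐᵒᵖ M] [SMulCommClass B Rᵐᵒᵖ M] [SMulCommClass Rᵐᵒᵖ k M]
    (r : R) : TensorB k B N M →ₗ[k] TensorB k B N M :=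
  Submodule.mapQ _ _
    (TensorProduct.map LinearMap.id (DistribSMul.toLinearMap k M (op r))) (by
    rw [balRel, Submodule.span_le]
    rintro _ ⟨n, b, m, rfl⟩
    simp only [SetLike.mem_coe, Submodule.mem_comap, map_sub, TensorProduct.map_tmul,
      LinearMap.id_coe, id_eq, DistribSMul.toLinearMap_apply]
    rw [← smul_comm b (op r) m]
    exact Submodule.subset_span ⟨n, b, op r • m, rfl⟩)


section Aux

variable (k B R : Type) [Field k] [Ring B] [Algebra k B] [Ring R] [Algebra k R]
variable (N N' N'' P M : Type)
  [AddCommGroup N] [Module Bᵐᵒᵖ N] [Module k N] [IsScalarTower k Bᵐᵒᵖ N]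
  [AddCommGroup N'] [Module Bᵐᵒᵖ N'] [Module k N'] [IsScalarTower k Bᵐᵒᵖ N']
  [AddCommGroup N''] [Module Bᵐᵒᵖ N''] [Module k N''] [IsScalarTower k Bᵐᵒᵖ N'']
  [AddCommGroup P] [Module B P] [Module k P] [IsScalarTower k B P]
  [AddCommGroup M] [Module B M] [Module k M] [IsScalarTower k B M]
  [Module Rᵐᵒᵖ M] [SMulCommClass B Rᵐᵒᵖ M] [SMulCommClass Rᵐᵒᵖ k M]

lemma mkB_bal (n : N) (b : B) (p : P) :
    (balRel k B N P).mkQ ((op b • n) ⊗ₜ[k] p) = (balRel k B N P).mkQ (n ⊗ₜ[k] (b • p)) := by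
  rw [← sub_eq_zero, ← map_sub, Submodule.mkQ_apply, Submodule.Quotient.mk_eq_zero]
  exact Submodule.subset_span ⟨n, b, p, rfl⟩

lemma tensorMapB_mk (f : N →ₗ[Bᵐᵒᵖ] N') (x : N ⊗[k] P) :
    tensorMapB k B N N' P f ((balRel k B N P).mkQ x) =
      (balRel k B N' P).mkQ (TensorProduct.map (f.restrictScalars k) LinearMap.id x) := by
  rw [Submodule.mkQ_apply, tensorMapB, Submodule.mapQ_apply, Submodule.mkQ_apply]

lemma tensorMapB_mk_tmul (f : N →ₗ[Bᵐᵒᵖ] N') (n : N) (p : P) :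
    tensorMapB k B N N' P f ((balRel k B N P).mkQ (n ⊗ₜ[k] p)) =
      (balRel k B N' P).mkQ (f n ⊗ₜ[k] p) := by
  rw [tensorMapB_mk]
  simp

lemma tensorSmulR_mk (r : R) (x : N ⊗[k] M) :
    tensorSmulR k B R N M r ((balRel k B N M).mkQ x) =
      (balRel k B N M).mkQ
        (TensorProduct.map LinearMap.id (DistribSMul.toLinearMap k M (op r)) x) := by
  rw [Submodule.mkQ_apply, tensorSmulR, Submodule.mapQ_apply, Submodule.mkQ_apply]

lemma tensorSmulR_mk_tmul (r : R) (n : N) (m : M) :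
    tensorSmulR k B R N M r ((balRel k B N M).mkQ (n ⊗ₜ[k] m)) =
      (balRel k B N M).mkQ (n ⊗ₜ[k] (op r • m)) := by
  rw [tensorSmulR_mk]
  simp

lemma TensorB.hom_ext {Q : Type} [AddCommGroup Q] [Module k Q]
    {f g : TensorB k B N P →ₗ[k] Q}
    (h : ∀ (n : N) (p : P),
      f ((balRel k B N P).mkQ (n ⊗ₜ[k] p)) = g ((balRel k B N P).mkQ (n ⊗ₜ[k] p))) :
    f = g := by
  apply Submodule.linearMap_qext
  exact TensorProduct.ext' fun n p => by simpa using h n p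

lemma tensorSmulR_one : tensorSmulR k B R N M 1 = LinearMap.id := by
  refine TensorB.hom_ext k B N M fun n m => ?_
  rw [tensorSmulR_mk_tmul]
  simp

lemma tensorSmulR_comp (r r' : R) :
    (tensorSmulR k B R N M r).comp (tensorSmulR k B R N M r') =
      tensorSmulR k B R N M (r' * r) := by
  refine TensorB.hom_ext k B N M fun n m => ?_
  rw [LinearMap.comp_apply, tensorSmulR_mk_tmul, tensorSmulR_mk_tmul, tensorSmulR_mk_tmul,
    smul_smul, ← op_mul]

lemma tensorSmulR_smul_smul (r r' : R) (z : TensorB k B N M) :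
    tensorSmulR k B R N M r (tensorSmulR k B R N M r' z) =
      tensorSmulR k B R N M (r' * r) z :=
  DFunLike.congr_fun (tensorSmulR_comp k B R N M r r') z

lemma tensorSmulR_add (r r' : R) :
    tensorSmulR k B R N M (r + r') = tensorSmulR k B R N M r + tensorSmulR k B R N M r' := by
  refine TensorB.hom_ext k B N M fun n m => ?_
  rw [LinearMap.add_apply, tensorSmulR_mk_tmul, tensorSmulR_mk_tmul, tensorSmulR_mk_tmul,
    op_add, add_smul, TensorProduct.tmul_add, map_add]

lemma tensorSmulR_zero : tensorSmulR k B R N M 0 = 0 := by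
  refine TensorB.hom_ext k B N M fun n m => ?_
  rw [tensorSmulR_mk_tmul]
  simp

lemma tensorMapB_comp_s7 (f : N →ₗ[Bᵐᵒᵖ] N') (g : N' →ₗ[Bᵐᵒᵖ] N'') :
    tensorMapB k B N N'' P (g.comp f) =
      (tensorMapB k B N' N'' P g).comp (tensorMapB k B N N' P f) := by
  refine TensorB.hom_ext k B N P fun n p => ?_
  rw [LinearMap.comp_apply, tensorMapB_mk_tmul, tensorMapB_mk_tmul, tensorMapB_mk_tmul]
  rfl

lemma tensorMapB_smulR_comm (f : N →ₗ[Bᵐᵒᵖ] N') (r : R) :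
    (tensorMapB k B N N' M f).comp (tensorSmulR k B R N M r) =
      (tensorSmulR k B R N' M r).comp (tensorMapB k B N N' M f) := by
  refine TensorB.hom_ext k B N M fun n m => ?_
  rw [LinearMap.comp_apply, LinearMap.comp_apply, tensorSmulR_mk_tmul, tensorMapB_mk_tmul,
    tensorMapB_mk_tmul, tensorSmulR_mk_tmul]

/-- The right `R`-module structure on `N ⊗_B M` coming from the right `R`-action on `M`. -/
noncomputable def tensorBModuleR : Module Rᵐᵒᵖ (TensorB k B N M) where
  smul r z := tensorSmulR k B R N M r.unop z
  one_smul z := by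
    show tensorSmulR k B R N M (1 : Rᵐᵒᵖ).unop z = z
    rw [unop_one, tensorSmulR_one, LinearMap.id_apply]
  mul_smul r s z := by
    show tensorSmulR k B R N M (r * s).unop z
      = tensorSmulR k B R N M r.unop (tensorSmulR k B R N M s.unop z)
    rw [tensorSmulR_smul_smul, unop_mul]
  smul_zero r := map_zero _
  smul_add r x y := map_add _ x y
  add_smul r s z := by
    show tensorSmulR k B R N M (r + s).unop z
      = tensorSmulR k B R N M r.unop z + tensorSmulR k B R N M s.unop z
    rw [unop_add, tensorSmulR_add, LinearMap.add_apply]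
  zero_smul z := by
    show tensorSmulR k B R N M (0 : Rᵐᵒᵖ).unop z = 0
    rw [unop_zero, tensorSmulR_zero, LinearMap.zero_apply]

lemma tensorB_isNoetherian [IsNoetherianRing Rᵐᵒᵖ] [Module.Finite Bᵐᵒᵖ N]
    [Module.Finite Rᵐᵒᵖ M] :
    letI := tensorBModuleR k B R N M
    IsNoetherian Rᵐᵒᵖ (TensorB k B N M) := by
  letI := tensorBModuleR k B R N M
  have hsmul : ∀ (r : R) (z : TensorB k B N M),
      (op r) • z = tensorSmulR k B R N M r z := fun _ _ => rfl
  obtain ⟨SN, hSN⟩ := Module.Finite.fg_top (R := Bᵐᵒᵖ) (M := N)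
  obtain ⟨SM, hSM⟩ := Module.Finite.fg_top (R := Rᵐᵒᵖ) (M := M)
  set V : Submodule Rᵐᵒᵖ (TensorB k B N M) :=
    Submodule.span Rᵐᵒᵖ
      (Set.image2 (fun (x : N) (m : M) => (balRel k B N M).mkQ (x ⊗ₜ[k] m)) ↑SN ↑SM) with hV
  have key : ∀ (x : N) (m : M), (balRel k B N M).mkQ (x ⊗ₜ[k] m) ∈ V := by
    have inner : ∀ x ∈ (SN : Set N), ∀ (m : M), (balRel k B N M).mkQ (x ⊗ₜ[k] m) ∈ V := by
      intro x hx m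
      have hm : m ∈ Submodule.span Rᵐᵒᵖ (SM : Set M) := by rw [hSM]; trivial
      induction hm using Submodule.span_induction with
      | mem g hg => exact Submodule.subset_span (Set.mem_image2_of_mem hx hg)
      | zero => rw [TensorProduct.tmul_zero, map_zero]; exact V.zero_mem
      | add a b _ _ ha hb => rw [TensorProduct.tmul_add, map_add]; exact V.add_mem ha hb
      | smul r a _ ha =>
        have : r • a = op r.unop • a := by rw [op_unop]
        rw [this, ← tensorSmulR_mk_tmul, ← hsmul]
        exact V.smul_mem _ ha
    intro x m
    have hx : x ∈ Submodule.span Bᵐᵒᵖ (SN : Set N) := by rw [hSN]; trivial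
    induction hx using Submodule.span_induction generalizing m with
    | mem y hy => exact inner y hy m
    | zero => rw [TensorProduct.zero_tmul, map_zero]; exact V.zero_mem
    | add a b _ _ ha hb => rw [TensorProduct.add_tmul, map_add]; exact V.add_mem (ha m) (hb m)
    | smul b a _ ha =>
      have : b • a = op b.unop • a := by rw [op_unop]
      rw [this, mkB_bal]
      exact ha _
  have hVtop : V = ⊤ := by
    rw [eq_top_iff]
    rintro z -
    obtain ⟨y, rfl⟩ := Submodule.mkQ_surjective _ z
    obtain ⟨S, rfl⟩ := TensorProduct.exists_finset y
    rw [map_sum]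
    exact Submodule.sum_mem _ fun i _ => key i.1 i.2
  haveI : Module.Finite Rᵐᵒᵖ (TensorB k B N M) := by
    constructor
    rw [← hVtop, hV]
    exact Submodule.fg_def.mpr
      ⟨_, Set.Finite.image2 _ SN.finite_toSet SM.finite_toSet, rfl⟩
  infer_instance

/-- Extraction of a finitely generated submodule witnessing vanishing of a tensor. -/
lemma exists_fg_extension {X : Submodule Bᵐᵒᵖ N} (t : TensorB k B (↥X) M)
    (ht : tensorMapB k B (↥X) N M X.subtype t = 0) :
    ∃ F : Submodule Bᵐᵒᵖ N, F.FG ∧ ∀ (Z : Submodule Bᵐᵒᵖ N) (hXZ : X ≤ Z), F ≤ Z →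
      tensorMapB k B (↥X) (↥Z) M (Submodule.inclusion hXZ) t = 0 := by
  obtain ⟨y, rfl⟩ := Submodule.mkQ_surjective _ t
  rw [tensorMapB_mk, Submodule.mkQ_apply, Submodule.Quotient.mk_eq_zero] at ht
  obtain ⟨F0, hF0sub, hF0mem⟩ := Submodule.mem_span_finite_of_mem_span ht
  choose ν bb μ hu using fun u : (F0 : Set (N ⊗[k] M)) => hF0sub u.2
  refine ⟨Submodule.span Bᵐᵒᵖ (Set.range ν),
    Submodule.fg_span (Set.finite_range ν), ?_⟩
  intro Z hXZ hFZ
  rw [tensorMapB_mk, Submodule.mkQ_apply, Submodule.Quotient.mk_eq_zero]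
  set ψ : ((↥Z) ⊗[k] M) →ₗ[k] (N ⊗[k] M) :=
    TensorProduct.map ((Z.subtype).restrictScalars k) LinearMap.id with hψ
  have hψinj : Function.Injective ψ := by
    have : ψ = LinearMap.rTensor M ((Z.subtype).restrictScalars k) := rfl
    rw [this]
    exact Module.Flat.rTensor_preserves_injective_linearMap _ Subtype.val_injective
  have hmem : TensorProduct.map ((X.subtype).restrictScalars k) LinearMap.id y ∈
      Submodule.map ψ (balRel k B (↥Z) M) := by
    refine Submodule.span_le.mpr ?_ hF0mem
    intro u huF0
    have hue := hu ⟨u, huF0⟩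
    have hνZ : ν ⟨u, huF0⟩ ∈ Z := hFZ (Submodule.subset_span (Set.mem_range_self _))
    refine ⟨(op (bb ⟨u, huF0⟩) • (⟨ν ⟨u, huF0⟩, hνZ⟩ : ↥Z)) ⊗ₜ[k] μ ⟨u, huF0⟩
        - (⟨ν ⟨u, huF0⟩, hνZ⟩ : ↥Z) ⊗ₜ[k] (bb ⟨u, huF0⟩ • μ ⟨u, huF0⟩),
      Submodule.subset_span ⟨_, _, _, rfl⟩, ?_⟩
    rw [map_sub, hψ]
    simp only [TensorProduct.map_tmul, LinearMap.coe_restrictScalars,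
      Submodule.coe_subtype, LinearMap.id_coe, id_eq, Submodule.coe_smul]
    exact hue.symm
  obtain ⟨w', hw'mem, hw'eq⟩ := hmem
  have hfact : ψ (TensorProduct.map
      (((Submodule.inclusion hXZ) : ↥X →ₗ[Bᵐᵒᵖ] ↥Z).restrictScalars k) LinearMap.id y) =
      TensorProduct.map ((X.subtype).restrictScalars k) LinearMap.id y := by
    rw [hψ, ← LinearMap.comp_apply, ← TensorProduct.map_comp]
    congr 1
  have : TensorProduct.map
      (((Submodule.inclusion hXZ) : ↥X →ₗ[Bᵐᵒᵖ] ↥Z).restrictScalars k) LinearMap.id y = w' :=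
    hψinj (by rw [hfact, hw'eq])
  rw [this]
  exact hw'mem

end Aux

set_option maxHeartbeats 2000000 in
/-- Let `R` and `B` be noetherian algebras and `M` a `B`-`R`-bimodule finitely generated as
a left `B`-module and as a right `R`-module.  Assume `M` is faithful and almost flat as a
left `B`-module.  Then for any right `B`-module `N`: `N ⊗_B M` is a torsion `R`-module if
and only if `N` is a torsion `B`-module (torsion: every cyclic submodule is
finite-dimensional). -/
theorem tensor_torsion_iff_torsion
    (k B R : Type) [Field k] [CharZero k] [Ring B] [Algebra k B] [Ring R] [Algebra k R]
    [IsNoetherianRing B] [IsNoetherianRing Bᵐᵒᵖ] [IsNoetherianRing R] [IsNoetherianRing Rᵐᵒᵖ]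
    (M : Type) [AddCommGroup M] [Module B M] [Module k M] [IsScalarTower k B M]
    [Module Rᵐᵒᵖ M] [SMulCommClass B Rᵐᵒᵖ M] [SMulCommClass Rᵐᵒᵖ k M]
    [Module.Finite B M] [Module.Finite Rᵐᵒᵖ M]
    (hfaith : ∀ (X : Type) [AddCommGroup X] [Module Bᵐᵒᵖ X] [Module k X]
      [IsScalarTower k Bᵐᵒᵖ X] [Module.Finite Bᵐᵒᵖ X],
      FiniteDimensional k (TensorB k B X M) → FiniteDimensional k X)
    (hflat : ∀ (X Y : Type) [AddCommGroup X] [Module Bᵐᵒᵖ X] [Module k X]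
      [IsScalarTower k Bᵐᵒᵖ X] [Module.Finite Bᵐᵒᵖ X]
      [AddCommGroup Y] [Module Bᵐᵒᵖ Y] [Module k Y]
      [IsScalarTower k Bᵐᵒᵖ Y] [Module.Finite Bᵐᵒᵖ Y]
      (f : X →ₗ[Bᵐᵒᵖ] Y), Function.Injective f →
        FiniteDimensional k (LinearMap.ker (tensorMapB k B X Y M f))) :
    ∀ (N : Type) [AddCommGroup N] [Module Bᵐᵒᵖ N] [Module k N] [IsScalarTower k Bᵐᵒᵖ N],
      ((∀ z : TensorB k B N M, FiniteDimensional k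
          (Submodule.span k {y | ∃ r : R, y = tensorSmulR k B R N M r z})) ↔
        (∀ n : N, FiniteDimensional k
          (Submodule.span k {x | ∃ b : B, x = op b • n}))) := by
  intro N _ _ _ _
  haveI : SMulCommClass Bᵐᵒᵖ k N := (IsScalarTower.to_smulCommClass (R := k) (A := Bᵐᵒᵖ) (M := N)).symm
  constructor
  · intro hz n
    set X : Submodule Bᵐᵒᵖ N := Submodule.span Bᵐᵒᵖ {n} with hX
    haveI : Module.Finite Bᵐᵒᵖ ↥X := Module.Finite.span_of_finite _ (Set.finite_singleton n)
    set φ : TensorB k B (↥X) M →ₗ[k] TensorB k B N M :=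
      tensorMapB k B (↥X) N M X.subtype with hφ
    -- Step A : range of φ is finite dimensional
    obtain ⟨GR, hGR⟩ := Module.Finite.fg_top (R := Rᵐᵒᵖ) (M := M)
    set U : Submodule k (TensorB k B N M) := GR.sup fun g =>
      Submodule.span k
        {y | ∃ r : R, y = tensorSmulR k B R N M r ((balRel k B N M).mkQ (n ⊗ₜ[k] g))} with hU
    haveI hUfd : FiniteDimensional k U := by
      haveI : ∀ g : M, FiniteDimensional k ↥(Submodule.span k
          {y | ∃ r : R, y = tensorSmulR k B R N M r ((balRel k B N M).mkQ (n ⊗ₜ[k] g))}) :=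
        fun g => hz _
      rw [hU]
      infer_instance
    have hUstab : ∀ (r : R), ∀ u ∈ U, tensorSmulR k B R N M r u ∈ U := by
      intro r u hu
      have hle : U ≤ U.comap (tensorSmulR k B R N M r) := by
        conv_lhs => rw [hU]
        refine Finset.sup_le fun g hg => Submodule.span_le.mpr ?_
        rintro _ ⟨r', rfl⟩
        simp only [SetLike.mem_coe, Submodule.mem_comap]
        rw [tensorSmulR_smul_smul, hU]
        have h1 := Finset.le_sup (f := fun g => Submodule.span k
          {y | ∃ r : R, y = tensorSmulR k B R N M r ((balRel k B N M).mkQ (n ⊗ₜ[k] g))}) hg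
        exact h1 (Submodule.subset_span ⟨r' * r, rfl⟩)
      exact hle hu
    have hkey : ∀ m : M, (balRel k B N M).mkQ (n ⊗ₜ[k] m) ∈ U := by
      intro m
      have hm : m ∈ Submodule.span Rᵐᵒᵖ (GR : Set M) := by rw [hGR]; trivial
      induction hm using Submodule.span_induction with
      | mem g hg =>
        have h1 := Finset.le_sup (f := fun g => Submodule.span k
          {y | ∃ r : R, y = tensorSmulR k B R N M r ((balRel k B N M).mkQ (n ⊗ₜ[k] g))}) hg
        rw [hU]
        refine h1 (Submodule.subset_span ⟨1, ?_⟩)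
        rw [tensorSmulR_one, LinearMap.id_apply]
      | zero => rw [TensorProduct.tmul_zero, map_zero]; exact U.zero_mem
      | add a b _ _ ha hb => rw [TensorProduct.tmul_add, map_add]; exact U.add_mem ha hb
      | smul r a _ ha =>
        have hra : r • a = op r.unop • a := by rw [op_unop]
        rw [hra, ← tensorSmulR_mk_tmul]
        exact hUstab _ _ ha
    have hrangele : LinearMap.range φ ≤ U := by
      rintro _ ⟨t, rfl⟩
      obtain ⟨y, rfl⟩ := Submodule.mkQ_surjective _ t
      have hy : y ∈ Submodule.span k {t : (↥X) ⊗[k] M | ∃ x m, x ⊗ₜ m = t} := by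
        rw [TensorProduct.span_tmul_eq_top]; trivial
      induction hy using Submodule.span_induction with
      | mem u hu =>
        obtain ⟨x, m, rfl⟩ := hu
        rw [hφ, tensorMapB_mk_tmul]
        have hx2 : (x : N) ∈ Submodule.span Bᵐᵒᵖ {n} := hX ▸ x.2
        obtain ⟨c, hc⟩ := Submodule.mem_span_singleton.mp hx2
        have hxc : (X.subtype x : N) = op c.unop • n := by
          rw [op_unop]
          exact hc.symm
        rw [hxc, mkB_bal]
        exact hkey _
      | zero => rw [map_zero, map_zero]; exact U.zero_mem
      | add a b _ _ ha hb => rw [map_add, map_add]; exact U.add_mem ha hb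
      | smul c a _ ha => rw [map_smul, map_smul]; exact U.smul_mem c ha
    haveI hrangefd : FiniteDimensional k (LinearMap.range φ) :=
      Submodule.finiteDimensional_of_le hrangele
    -- Step B : kernel of φ is finite dimensional
    letI instR := tensorBModuleR k B R (↥X) M
    haveI hnoeth : IsNoetherian Rᵐᵒᵖ (TensorB k B (↥X) M) := tensorB_isNoetherian k B R (↥X) M
    have Ksmul : ∀ (Y : Submodule Bᵐᵒᵖ N) (hXY : X ≤ Y) (r : Rᵐᵒᵖ) (t : TensorB k B (↥X) M),
        tensorMapB k B (↥X) (↥Y) M (Submodule.inclusion hXY) t = 0 →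
        tensorMapB k B (↥X) (↥Y) M (Submodule.inclusion hXY) (r • t) = 0 := by
      intro Y hXY r t ht
      have hrt : (r : Rᵐᵒᵖ) • t = tensorSmulR k B R (↥X) M r.unop t := rfl
      rw [hrt]
      have hc := DFunLike.congr_fun
        (tensorMapB_smulR_comm k B R (↥X) (↥Y) M (Submodule.inclusion hXY) r.unop) t
      simp only [LinearMap.comp_apply] at hc
      rw [hc, ht, map_zero]
    let K : (Y : Submodule Bᵐᵒᵖ N) → X ≤ Y → Submodule Rᵐᵒᵖ (TensorB k B (↥X) M) :=
      fun Y hXY =>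
      { carrier := {t | tensorMapB k B (↥X) (↥Y) M (Submodule.inclusion hXY) t = 0}
        add_mem' := fun {a b} ha hb => by
          simp only [Set.mem_setOf_eq] at *
          rw [map_add, ha, hb, add_zero]
        zero_mem' := by simp only [Set.mem_setOf_eq, map_zero]
        smul_mem' := fun r t ht => Ksmul Y hXY r t ht }
    have Kmem : ∀ (Y : Submodule Bᵐᵒᵖ N) (hXY : X ≤ Y) (t : TensorB k B (↥X) M),
        t ∈ K Y hXY ↔ tensorMapB k B (↥X) (↥Y) M (Submodule.inclusion hXY) t = 0 :=
      fun _ _ _ => Iff.rfl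
    have hmono : ∀ (Y Z : Submodule Bᵐᵒᵖ N) (hXY : X ≤ Y) (hYZ : Y ≤ Z),
        K Y hXY ≤ K Z (hXY.trans hYZ) := by
      intro Y Z hXY hYZ t ht
      rw [Kmem] at ht ⊢
      have hcomp : (Submodule.inclusion (hXY.trans hYZ) : ↥X →ₗ[Bᵐᵒᵖ] ↥Z)
          = (Submodule.inclusion hYZ).comp (Submodule.inclusion hXY) :=
        LinearMap.ext fun x => rfl
      rw [hcomp, tensorMapB_comp_s7, LinearMap.comp_apply, ht, map_zero]
    have hKle : ∀ (Y : Submodule Bᵐᵒᵖ N) (hXY : X ≤ Y) (t : TensorB k B (↥X) M),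
        t ∈ K Y hXY → φ t = 0 := by
      intro Y hXY t ht
      rw [Kmem] at ht
      have hcomp : (X.subtype : ↥X →ₗ[Bᵐᵒᵖ] N) = Y.subtype.comp (Submodule.inclusion hXY) :=
        (Submodule.subtype_comp_inclusion X Y hXY).symm
      rw [hφ, hcomp, tensorMapB_comp_s7, LinearMap.comp_apply, ht, map_zero]
    have hSnon : ({K' | ∃ (Y : Submodule Bᵐᵒᵖ N) (hXY : X ≤ Y), Y.FG ∧ K' = K Y hXY} :
        Set (Submodule Rᵐᵒᵖ (TensorB k B (↥X) M))).Nonempty :=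
      ⟨K X le_rfl, X, le_rfl, hX ▸ Submodule.fg_span (Set.finite_singleton n), rfl⟩
    obtain ⟨K₀, hK₀mem, hmax⟩ := set_has_maximal_iff_noetherian.mpr hnoeth _ hSnon
    obtain ⟨Y₀, hXY₀, hY₀fg, rfl⟩ := hK₀mem
    have hkereq : LinearMap.ker φ =
        LinearMap.ker (tensorMapB k B (↥X) (↥Y₀) M (Submodule.inclusion hXY₀)) := by
      ext t
      simp only [LinearMap.mem_ker]
      constructor
      · intro ht
        obtain ⟨F, hFfg, hFprop⟩ := exists_fg_extension k B N M t (hφ ▸ ht)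
        have hXZ : X ≤ Y₀ ⊔ F := hXY₀.trans le_sup_left
        have htZ : t ∈ K (Y₀ ⊔ F) hXZ := (Kmem _ _ _).mpr (hFprop _ hXZ le_sup_right)
        have hle0 : K Y₀ hXY₀ ≤ K (Y₀ ⊔ F) hXZ := hmono Y₀ (Y₀ ⊔ F) hXY₀ le_sup_left
        have heq : K Y₀ hXY₀ = K (Y₀ ⊔ F) hXZ := by
          by_contra hne
          exact hmax _ ⟨Y₀ ⊔ F, hXZ, hY₀fg.sup hFfg, rfl⟩ (lt_of_le_of_ne hle0 hne)
        exact (Kmem _ _ _).mp (heq ▸ htZ)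
      · intro ht
        exact hKle Y₀ hXY₀ t ((Kmem _ _ _).mpr ht)
    haveI : Module.Finite Bᵐᵒᵖ ↥Y₀ := Module.Finite.iff_fg.mpr hY₀fg
    haveI hkerfd : FiniteDimensional k (LinearMap.ker φ) := by
      rw [hkereq]
      exact hflat (↥X) (↥Y₀) (Submodule.inclusion hXY₀) (Submodule.inclusion_injective hXY₀)
    -- combine
    haveI hTfd : FiniteDimensional k (TensorB k B (↥X) M) := by
      have h1 : (Submodule.map φ ⊤).FG := by
        rw [Submodule.map_top]
        exact (Submodule.fg_iff_finiteDimensional _).mpr hrangefd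
      have h2 : (⊤ ⊓ LinearMap.ker φ).FG := by
        rw [top_inf_eq]
        exact (Submodule.fg_iff_finiteDimensional _).mpr hkerfd
      exact Module.finite_def.mpr (Submodule.fg_of_fg_map_of_fg_inf_ker φ h1 h2)
    haveI hXfd : FiniteDimensional k ↥X := hfaith (↥X) hTfd
    have hset : Submodule.span k {x | ∃ b : B, x = op b • n} = X.restrictScalars k := by
      apply le_antisymm
      · rw [Submodule.span_le]
        rintro _ ⟨b, rfl⟩
        simp only [SetLike.mem_coe, Submodule.restrictScalars_mem]
        exact X.smul_mem (op b) (hX ▸ Submodule.mem_span_singleton_self n)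
      · intro x hx
        rw [Submodule.restrictScalars_mem, hX] at hx
        obtain ⟨c, rfl⟩ := Submodule.mem_span_singleton.mp hx
        exact Submodule.subset_span ⟨c.unop, by rw [op_unop]⟩
    rw [hset]
    exact Module.Finite.equiv ((Submodule.restrictScalarsEquiv k Bᵐᵒᵖ N X).restrictScalars k).symm
  · intro hN z
    obtain ⟨y, rfl⟩ := Submodule.mkQ_surjective _ z
    obtain ⟨S, rfl⟩ := TensorProduct.exists_finset y
    obtain ⟨G, hG⟩ := Module.Finite.fg_top (R := B) (M := M)
    set N₀ : Submodule k N :=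
      S.sup (fun i => Submodule.span k {x | ∃ b : B, x = op b • i.1}) with hN₀
    haveI : FiniteDimensional k N₀ := by
      haveI : ∀ i : N × M, FiniteDimensional k
          (Submodule.span k {x | ∃ b : B, x = op b • i.1}) := fun i => hN i.1
      infer_instance
    have hmemN₀ : ∀ i ∈ S, i.1 ∈ N₀ := by
      intro i hi
      rw [hN₀]
      have h1 := Finset.le_sup (f := fun i : N × M =>
        Submodule.span k {x | ∃ b : B, x = op b • i.1}) hi
      exact h1 (Submodule.subset_span ⟨1, by rw [op_one, one_smul]⟩)
    have hstab : ∀ (b : B), ∀ x ∈ N₀, op b • x ∈ N₀ := by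
      intro b x hx
      have hle : N₀ ≤ N₀.comap (DistribSMul.toLinearMap k N (op b)) := by
        refine Finset.sup_le fun i hi => Submodule.span_le.mpr ?_
        rintro _ ⟨b', rfl⟩
        simp only [SetLike.mem_coe, Submodule.mem_comap, DistribSMul.toLinearMap_apply]
        rw [smul_smul, ← op_mul]
        have h1 := Finset.le_sup (f := fun i : N × M =>
          Submodule.span k {x | ∃ b'' : B, x = op b'' • i.1}) hi
        rw [hN₀]
        exact h1 (Submodule.subset_span ⟨b' * b, rfl⟩)
      exact hle hx
    set W : Submodule k (TensorB k B N M) :=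
      (G.sup fun g => N₀.map ((TensorProduct.mk k N M).flip g)).map (balRel k B N M).mkQ with hW
    haveI : FiniteDimensional k W := by
      haveI : ∀ g : M, FiniteDimensional k (N₀.map ((TensorProduct.mk k N M).flip g)) :=
        fun g => Module.Finite.map _ _
      haveI : FiniteDimensional k ↥(G.sup fun g => N₀.map ((TensorProduct.mk k N M).flip g)) :=
        inferInstance
      exact Module.Finite.map _ _
    have claim : ∀ (m : M), ∀ x ∈ N₀, (balRel k B N M).mkQ (x ⊗ₜ[k] m) ∈ W := by
      intro m
      have hm : m ∈ Submodule.span B (G : Set M) := by rw [hG]; trivial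
      induction hm using Submodule.span_induction with
      | mem g hg =>
        intro x hx
        refine Submodule.mem_map_of_mem ?_
        have h1 := Finset.le_sup (f := fun g =>
          N₀.map ((TensorProduct.mk k N M).flip g)) hg
        exact h1 (Submodule.mem_map_of_mem hx)
      | zero =>
        intro x hx
        rw [TensorProduct.tmul_zero, map_zero]; exact W.zero_mem
      | add a b _ _ ha hb =>
        intro x hx
        rw [TensorProduct.tmul_add, map_add]; exact W.add_mem (ha x hx) (hb x hx)
      | smul b a _ ha =>
        intro x hx
        rw [← mkB_bal]
        exact ha _ (hstab b x hx)
    refine Submodule.finiteDimensional_of_le (S₂ := W) (Submodule.span_le.mpr ?_)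
    rintro _ ⟨r, rfl⟩
    rw [tensorSmulR_mk, map_sum, map_sum]
    refine Submodule.sum_mem _ fun i hi => ?_
    rw [TensorProduct.map_tmul, LinearMap.id_apply, DistribSMul.toLinearMap_apply]
    exact claim _ i.1 (hmemN₀ i hi)
end

section
/- Let H be a finite-dimensional Hopf algebra, A a left H-module algebra, and t a nonzero integral of H. Then the algebra extension A/A^H is a right H*-dense Galois extension (the canonical map β : A ⊗_{A^H} A → A ⊗ H* has finite-dimensional cokernel) if and only if the map [ , ] : A ⊗_{A^H} A → A#H, a ⊗ b ↦ (a#t)(b#1), has finite-dimensional cokernel. -/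
open TensorProduct MulOpposite

/-- For a left `H`-module algebra `A`, the action on a fixed element `b ∈ A` as a
`k`-linear map `H →ₗ[k] A`, `h ↦ h • b`. -/
def actL (k H A : Type) [Field k] [Ring H] [Algebra k H] [Ring A] [Algebra k A]
    [Module H A] [IsScalarTower k H A] (b : A) : H →ₗ[k] A where
  toFun h := h • b
  map_add' h h' := add_smul h h' b
  map_smul' c h := smul_assoc c h b

/-- The subspace of `A ⊗[k] A` spanned by the relations `(a·r) ⊗ b − a ⊗ (r·b)` for
`r ∈ A^H`, so that the quotient is `A ⊗_{A^H} A`. -/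
def relInv (k H A : Type) [Field k] [Ring H] [HopfAlgebra k H] [Ring A] [Algebra k A]
    [Module H A] [IsScalarTower k H A] : Submodule k (A ⊗[k] A) :=
  Submodule.span k {x | ∃ a b r : A,
    (∀ h : H, h • r = (Coalgebra.counit (R := k) h) • r) ∧
    x = (a * r) ⊗ₜ[k] b - a ⊗ₜ[k] (r * b)}


section ThetaAux

open Coalgebra HopfAlgebra

variable {k H : Type} [Field k] [Ring H] [HopfAlgebra k H]

/-- `θ : H* → H`, `f ↦ (f ⊗ id)(Δ t)`. -/
noncomputable def theta (t : H) : Module.Dual k H →ₗ[k] H where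
  toFun f := TensorProduct.lid k H ((f.rTensor H) (Coalgebra.comul t))
  map_add' f g := by simp [LinearMap.rTensor_add]
  map_smul' c f := by simp [LinearMap.rTensor_smul]

lemma theta_counit (t : H) : theta (k := k) t (Coalgebra.counit) = t := by
  simp [theta]

variable {ι : Type} [Fintype ι] (b : Module.Basis ι k H)

lemma expand_tensor (z : H ⊗[k] H) :
    ∑ i, b i ⊗ₜ[k] (TensorProduct.lid k H ((b.coord i).rTensor H z)) = z := by
  induction z using TensorProduct.induction_on with
  | zero => simp
  | tmul x y =>
      simp only [LinearMap.rTensor_tmul, lid_tmul, tmul_smul]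
      calc ∑ i, (b.coord i) x • b i ⊗ₜ[k] y
          = ∑ i, ((b.coord i) x • b i) ⊗ₜ[k] y := by
            simp only [TensorProduct.smul_tmul']
        _ = (∑ i, (b.coord i) x • b i) ⊗ₜ[k] y := by rw [← TensorProduct.sum_tmul]
        _ = x ⊗ₜ[k] y := by
            congr 1
            simp only [Module.Basis.coord_apply]
            exact b.sum_repr x
  | add u v hu hv =>
      simp only [map_add, tmul_add, Finset.sum_add_distrib, hu, hv]


variable (t : H)

lemma comul_t_rep : ∑ i, b i ⊗ₜ[k] theta (k := k) t (b.coord i) = Coalgebra.comul t :=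
  expand_tensor b _

lemma theta_eq_sum (f : Module.Dual k H) :
    theta (k := k) t f = ∑ i, f (b i) • theta (k := k) t (b.coord i) := by
  conv_lhs => rw [show theta (k := k) t f
    = TensorProduct.lid k H ((f.rTensor H) (Coalgebra.comul t)) from rfl,
    ← comul_t_rep b t]
  simp [map_sum]

lemma comul_mul_comul (htint : ∀ h : H, h * t = Coalgebra.counit (R := k) h • t) (g : H) :
    Coalgebra.comul g * Coalgebra.comul t
      = Coalgebra.counit (R := k) g • Coalgebra.comul (R := k) t := by
  rw [← Bialgebra.comul_mul, htint, map_smul]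

lemma sum_antipode_tmul_one_mul_comul (h : H) (r : Coalgebra.Repr k h (H × H)) :
    ∑ i ∈ r.index, ((antipode (R := k) (r.left i)) ⊗ₜ[k] (1 : H)) * Coalgebra.comul (r.right i)
      = (1 : H) ⊗ₜ[k] h := by
  set a₁ : ∀ i : r.ι, Coalgebra.Repr k (r.left i) (H × H) := fun i => ℛ k (r.left i) with ha₁
  set a₂ : ∀ i : r.ι, Coalgebra.Repr k (r.right i) (H × H) := fun i => ℛ k (r.right i) with ha₂
  have hco := Coalgebra.sum_tmul_tmul_eq r a₁ a₂
  set Λ : H ⊗[k] (H ⊗[k] H) →ₗ[k] H ⊗[k] H :=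
    (LinearMap.mul' k H).rTensor H ∘ₗ ((antipode (R := k) (A := H)).rTensor H).rTensor H
      ∘ₗ (TensorProduct.assoc k H H H).symm.toLinearMap with hΛdef
  have hΛ : ∀ x u v : H, Λ (x ⊗ₜ[k] (u ⊗ₜ[k] v)) = (antipode (R := k) x * u) ⊗ₜ[k] v := by
    intro x u v
    simp [hΛdef, TensorProduct.assoc_symm_tmul]
  have key := congrArg Λ hco
  simp only [map_sum, hΛ] at key
  have hL : ∀ i ∈ r.index, ∑ j ∈ (a₁ i).index,
      (antipode (R := k) ((a₁ i).left j) * (a₁ i).right j) ⊗ₜ[k] r.right i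
      = Coalgebra.counit (R := k) (r.left i) • ((1 : H) ⊗ₜ[k] r.right i) := by
    intro i _
    rw [← TensorProduct.sum_tmul, HopfAlgebra.sum_antipode_mul_eq_smul (a₁ i),
      ← TensorProduct.smul_tmul']
  have hR : ∀ i ∈ r.index, ∑ j ∈ (a₂ i).index,
      (antipode (R := k) (r.left i) * (a₂ i).left j) ⊗ₜ[k] (a₂ i).right j
      = (antipode (R := k) (r.left i) ⊗ₜ[k] (1 : H)) * Coalgebra.comul (r.right i) := by
    intro i _
    rw [← (a₂ i).eq, Finset.mul_sum]
    exact Finset.sum_congr rfl fun j _ => by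
      rw [Algebra.TensorProduct.tmul_mul_tmul, one_mul]
  rw [Finset.sum_congr rfl hL, Finset.sum_congr rfl hR] at key
  have hLL : ∑ i ∈ r.index, Coalgebra.counit (R := k) (r.left i) • ((1 : H) ⊗ₜ[k] r.right i)
      = (1 : H) ⊗ₜ[k] h := by
    calc ∑ i ∈ r.index, Coalgebra.counit (R := k) (r.left i) • ((1 : H) ⊗ₜ[k] r.right i)
        = (1 : H) ⊗ₜ[k] ∑ i ∈ r.index, Coalgebra.counit (R := k) (r.left i) • r.right i := by
          rw [TensorProduct.tmul_sum]
          exact Finset.sum_congr rfl fun i _ => by rw [TensorProduct.tmul_smul]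
      _ = (1 : H) ⊗ₜ[k] h := by
          congr 1
          have h2 := Coalgebra.sum_counit_tmul_eq (R := k) r
          have h3 := congrArg (TensorProduct.lid k H) h2
          simp only [map_sum, lid_tmul, one_smul] at h3
          exact h3
  rw [hLL] at key
  exact key.symm

lemma key_identity (htint : ∀ h : H, h * t = Coalgebra.counit (R := k) h • t) (h : H) :
    ((1 : H) ⊗ₜ[k] h) * Coalgebra.comul t
      = (antipode (R := k) h ⊗ₜ[k] (1 : H)) * Coalgebra.comul (R := k) t := by
  have r := ℛ k h
  calc ((1 : H) ⊗ₜ[k] h) * Coalgebra.comul (R := k) t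
      = (∑ i ∈ r.index, (antipode (R := k) (r.left i) ⊗ₜ[k] (1 : H))
          * Coalgebra.comul (r.right i)) * Coalgebra.comul t := by
        rw [sum_antipode_tmul_one_mul_comul h r]
    _ = ∑ i ∈ r.index, (antipode (R := k) (r.left i) ⊗ₜ[k] (1 : H))
          * (Coalgebra.comul (r.right i) * Coalgebra.comul t) := by
        rw [Finset.sum_mul]
        exact Finset.sum_congr rfl fun i _ => by rw [mul_assoc]
    _ = ∑ i ∈ r.index, ((Coalgebra.counit (R := k) (r.right i) • antipode (R := k) (r.left i))
          ⊗ₜ[k] (1 : H)) * Coalgebra.comul (R := k) t := by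
        refine Finset.sum_congr rfl fun i _ => ?_
        rw [comul_mul_comul t htint, mul_smul_comm, ← smul_mul_assoc,
          TensorProduct.smul_tmul']
    _ = ((∑ i ∈ r.index, Coalgebra.counit (R := k) (r.right i) • antipode (R := k) (r.left i))
          ⊗ₜ[k] (1 : H)) * Coalgebra.comul (R := k) t := by
        rw [← Finset.sum_mul, ← TensorProduct.sum_tmul]
    _ = (antipode (R := k) h ⊗ₜ[k] (1 : H)) * Coalgebra.comul (R := k) t := by
        congr 2
        have h4 : ∑ i ∈ r.index, Coalgebra.counit (R := k) (r.right i) • r.left i = h := by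
          have h2 := Coalgebra.sum_tmul_counit_eq (R := k) r
          have h3 := congrArg (TensorProduct.rid k H) h2
          simp only [map_sum, rid_tmul, one_smul] at h3
          exact h3
        calc ∑ i ∈ r.index, Coalgebra.counit (R := k) (r.right i) • antipode (R := k) (r.left i)
            = antipode (R := k) (∑ i ∈ r.index,
                Coalgebra.counit (R := k) (r.right i) • r.left i) := by
              rw [map_sum]
              exact Finset.sum_congr rfl fun i _ => (map_smul _ _ _).symm
          _ = antipode (R := k) h := by rw [h4]


lemma comul_theta (f : Module.Dual k H) :
    Coalgebra.comul (R := k) (theta (k := k) t f)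
      = ∑ i, (TensorProduct.lid k H ((f.rTensor H) (Coalgebra.comul (b i)))) ⊗ₜ[k]
          theta (k := k) t (b.coord i) := by
  have hrep := comul_t_rep b t
  set Ξ : H ⊗[k] (H ⊗[k] H) →ₗ[k] H ⊗[k] H :=
    (TensorProduct.lid k (H ⊗[k] H)).toLinearMap ∘ₗ f.rTensor (H ⊗[k] H) with hΞ
  have hΞtmul : ∀ (x : H) (z : H ⊗[k] H), Ξ (x ⊗ₜ[k] z) = f x • z := by
    intro x z; simp [hΞ]
  have hΞassoc : ∀ (z : H ⊗[k] H) (w : H),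
      Ξ (TensorProduct.assoc k H H H (z ⊗ₜ[k] w))
        = (TensorProduct.lid k H ((f.rTensor H) z)) ⊗ₜ[k] w := by
    intro z w
    induction z using TensorProduct.induction_on with
    | zero =>
        rw [TensorProduct.zero_tmul, LinearEquiv.map_zero, LinearMap.map_zero,
          LinearMap.map_zero, LinearEquiv.map_zero, TensorProduct.zero_tmul]
    | tmul u v =>
        rw [TensorProduct.assoc_tmul, hΞtmul]
        simp [TensorProduct.smul_tmul']
    | add z1 z2 h1 h2 =>
        simp only [TensorProduct.add_tmul, map_add, h1, h2]
  have hco := Coalgebra.coassoc_apply (R := k) t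
  have h1 : (Coalgebra.comul (R := k) (A := H)).lTensor H (Coalgebra.comul t)
      = ∑ i, b i ⊗ₜ[k] Coalgebra.comul (R := k) (theta (k := k) t (b.coord i)) := by
    rw [← hrep, map_sum]
    simp
  have h2 : (Coalgebra.comul (R := k) (A := H)).rTensor H (Coalgebra.comul t)
      = ∑ i, Coalgebra.comul (R := k) (b i) ⊗ₜ[k] theta (k := k) t (b.coord i) := by
    rw [← hrep, map_sum]
    simp
  have h3 : Coalgebra.comul (R := k) (theta (k := k) t f)
      = Ξ ((Coalgebra.comul (R := k) (A := H)).lTensor H (Coalgebra.comul t)) := by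
    rw [h1, map_sum]
    simp only [hΞtmul]
    rw [theta_eq_sum b t f, map_sum]
    exact Finset.sum_congr rfl fun i _ => map_smul _ _ _
  rw [h3, ← hco, h2, map_sum, map_sum]
  exact Finset.sum_congr rfl fun i _ => hΞassoc _ _

include b in
lemma mul_theta (htint : ∀ h : H, h * t = Coalgebra.counit (R := k) h • t)
    (h : H) (f : Module.Dual k H) :
    h * theta (k := k) t f
      = theta (k := k) t (f ∘ₗ LinearMap.mulLeft k (antipode (R := k) h)) := by
  have hrep := comul_t_rep b t
  have hkey := key_identity t htint h
  rw [← hrep] at hkey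
  simp only [Finset.mul_sum, Finset.sum_mul, Algebra.TensorProduct.tmul_mul_tmul,
    one_mul, mul_one] at hkey
  have h5 := congrArg (fun z => TensorProduct.lid k H ((f.rTensor H) z)) hkey
  simp only [map_sum, LinearMap.rTensor_tmul, lid_tmul] at h5
  rw [theta_eq_sum b t f, theta_eq_sum b t (f ∘ₗ LinearMap.mulLeft k (antipode (R := k) h)),
    Finset.mul_sum]
  simpa [mul_smul_comm] using h5

end ThetaAux

section Surj

open Coalgebra HopfAlgebra

variable {k H : Type} [Field k] [Ring H] [HopfAlgebra k H]

lemma theta_surjective [FiniteDimensional k H] (t : H) (ht : t ≠ 0)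
    (htint : ∀ h : H, h * t = Coalgebra.counit (R := k) h • t) :
    Function.Surjective (theta (k := k) t) := by
  classical
  set b := Module.finBasis k H with hb
  set W := LinearMap.range (theta (k := k) t) with hW
  have hy : ∀ i, theta (k := k) t (b.coord i) ∈ W := fun i => ⟨b.coord i, rfl⟩
  have hmul : ∀ (h w : H), w ∈ W → h * w ∈ W := by
    intro h w hw
    obtain ⟨f, rfl⟩ := hw
    rw [mul_theta b t htint h f]
    exact ⟨_, rfl⟩
  by_cases hc : ∀ i, Coalgebra.counit (R := k) (theta (k := k) t (b.coord i)) = 0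
  · exfalso
    apply ht
    have h1 := Coalgebra.lTensor_counit_comul (R := k)
      (theta (k := k) t (Coalgebra.counit (R := k) (A := H)))
    rw [comul_theta b t (Coalgebra.counit (R := k) (A := H)), theta_counit] at h1
    simp only [map_sum, LinearMap.lTensor_tmul, hc, TensorProduct.tmul_zero,
      Finset.sum_const_zero] at h1
    have h2 := congrArg (TensorProduct.rid k H) h1.symm
    simpa using h2
  · push_neg at hc
    obtain ⟨i₀, hi₀⟩ := hc
    have key := HopfAlgebra.mul_antipode_rTensor_comul_apply (R := k)
      (theta (k := k) t (b.coord i₀))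
    rw [comul_theta b t (b.coord i₀)] at key
    simp only [map_sum, LinearMap.rTensor_tmul, LinearMap.mul'_apply] at key
    have hmem : algebraMap k H
        (Coalgebra.counit (R := k) (theta (k := k) t (b.coord i₀))) ∈ W := by
      rw [← key]
      exact Submodule.sum_mem _ fun i _ => hmul _ _ (hy i)
    have h1W : (1 : H) ∈ W := by
      rw [Algebra.algebraMap_eq_smul_one] at hmem
      have h3 := W.smul_mem
        (Coalgebra.counit (R := k) (theta (k := k) t (b.coord i₀)))⁻¹ hmem
      rwa [smul_smul, inv_mul_cancel₀ hi₀, one_smul] at h3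
    intro x
    have h4 := hmul x 1 h1W
    rw [mul_one] at h4
    exact h4

lemma theta_bijective [FiniteDimensional k H] (t : H) (ht : t ≠ 0)
    (htint : ∀ h : H, h * t = Coalgebra.counit (R := k) h • t) :
    Function.Bijective (theta (k := k) t) := by
  have hs := theta_surjective t ht htint
  exact ⟨(LinearMap.injective_iff_surjective_of_finrank_eq_finrank
    (by rw [Subspace.dual_finrank_eq])).2 hs, hs⟩

end Surj

/-- Let `H` be a finite-dimensional Hopf algebra, `A` a left `H`-module algebra and `t` a
nonzero integral of `H`.  Then `A/A^H` is a right `H*`-dense Galois extension (the canonical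
map `β : A ⊗_{A^H} A → A ⊗ H*` has finite-dimensional cokernel; under the canonical
identification `A ⊗ H* ≅ Hom(H, A)`, `β(a ⊗ b) = (h ↦ a (h·b))`) if and only if the map
`[ , ] : A ⊗_{A^H} A → A#H`, `a ⊗ b ↦ (a#t)(b#1) = Σ a(t₁·b) # t₂`, has finite-dimensional
cokernel. -/
theorem dense_galois_iff_bracket_almost_surjective
    (k H A : Type) [Field k] [CharZero k]
    [Ring H] [HopfAlgebra k H] [FiniteDimensional k H]
    [Ring A] [Algebra k A] [Module H A] [IsScalarTower k H A]
    (hsmul_mul : ∀ (h : H) (a b : A), h • (a * b) =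
      (LinearMap.mul' k A) ((TensorProduct.map (actL k H A a) (actL k H A b))
        (Coalgebra.comul h)))
    (hsmul_one : ∀ h : H, h • (1 : A) = (Coalgebra.counit (R := k) h) • (1 : A))
    (t : H) (ht : t ≠ 0)
    (htint : ∀ h : H, h * t = (Coalgebra.counit (R := k) h) • t)
    (β : ((A ⊗[k] A) ⧸ relInv k H A) →ₗ[k] (H →ₗ[k] A))
    (hβ : ∀ a b : A, β (Submodule.Quotient.mk (a ⊗ₜ[k] b)) =
      (LinearMap.mulLeft k a).comp (actL k H A b))
    (brk : ((A ⊗[k] A) ⧸ relInv k H A) →ₗ[k] (A ⊗[k] H))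
    (hbrk : ∀ a b : A, brk (Submodule.Quotient.mk (a ⊗ₜ[k] b)) =
      (TensorProduct.map ((LinearMap.mulLeft k a).comp (actL k H A b)) LinearMap.id)
        (Coalgebra.comul t)) :
    FiniteDimensional k ((H →ₗ[k] A) ⧸ LinearMap.range β) ↔
      FiniteDimensional k ((A ⊗[k] H) ⧸ LinearMap.range brk) := by
  classical
  have hbij : Function.Bijective (theta (k := k) t) := theta_bijective t ht htint
  let e : Module.Dual k H ≃ₗ[k] H := LinearEquiv.ofBijective _ hbij
  let Φeq : (H →ₗ[k] A) ≃ₗ[k] A ⊗[k] H :=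
    (dualTensorHomEquiv k H A).symm ≪≫ₗ LinearEquiv.rTensor A e ≪≫ₗ TensorProduct.comm k H A
  have hΦ : ∀ g : H →ₗ[k] A, Φeq g
      = (TensorProduct.map g LinearMap.id) (Coalgebra.comul t) := by
    intro g
    obtain ⟨x, rfl⟩ := (dualTensorHomEquiv k H A).surjective g
    simp only [Φeq, LinearEquiv.trans_apply, LinearEquiv.symm_apply_apply]
    induction x using TensorProduct.induction_on with
    | zero =>
        simp only [LinearEquiv.map_zero, TensorProduct.map_zero_left, LinearMap.zero_apply]
    | tmul f a =>
        set b := Module.finBasis k H with hb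
        have h1 : LinearEquiv.rTensor (R := k) A e (f ⊗ₜ[k] a) = theta (k := k) t f ⊗ₜ[k] a := rfl
        rw [h1, TensorProduct.comm_tmul]
        rw [← comul_t_rep b t, map_sum]
        have h2 : ∀ i, (TensorProduct.map ((dualTensorHomEquiv k H A) (f ⊗ₜ[k] a))
            LinearMap.id) (b i ⊗ₜ[k] theta (k := k) t (b.coord i))
            = f (b i) • (a ⊗ₜ[k] theta (k := k) t (b.coord i)) := by
          intro i
          rw [TensorProduct.map_tmul]
          have h3 : (dualTensorHomEquiv k H A) (f ⊗ₜ[k] a) (b i) = f (b i) • a := by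
            simp [dualTensorHomEquiv]
          rw [h3, LinearMap.id_coe, id_eq, TensorProduct.smul_tmul']
        rw [Finset.sum_congr rfl fun i _ => h2 i]
        rw [theta_eq_sum b t f, TensorProduct.tmul_sum]
        exact Finset.sum_congr rfl fun i _ => TensorProduct.tmul_smul _ _ _
    | add u v hu hv =>
        rw [map_add, map_add, map_add, TensorProduct.map_add_left, LinearMap.add_apply,
          hu, hv]
  have hβΦ : brk = Φeq.toLinearMap ∘ₗ β := by
    apply LinearMap.ext
    intro x
    obtain ⟨z, rfl⟩ := Submodule.Quotient.mk_surjective _ x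
    change brk (Submodule.Quotient.mk z) = Φeq (β (Submodule.Quotient.mk z))
    induction z using TensorProduct.induction_on with
    | zero =>
        have : (Submodule.Quotient.mk (0 : A ⊗[k] A) : (A ⊗[k] A) ⧸ relInv k H A) = 0 := rfl
        rw [this, map_zero, map_zero, map_zero]
    | tmul a c => rw [hbrk, hβ, hΦ]
    | add u v hu hv =>
        have : (Submodule.Quotient.mk (u + v) : (A ⊗[k] A) ⧸ relInv k H A)
            = Submodule.Quotient.mk u + Submodule.Quotient.mk v := rfl
        rw [this, map_add, map_add, map_add, hu, hv]
  have hrange : (LinearMap.range β).map (Φeq : (H →ₗ[k] A) →ₗ[k] A ⊗[k] H)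
      = LinearMap.range brk := by
    rw [hβΦ, LinearMap.range_comp]
  let q := Submodule.Quotient.equiv (LinearMap.range β) (LinearMap.range brk) Φeq hrange
  constructor
  · intro h
    exact Module.Finite.equiv q
  · intro h
    exact Module.Finite.equiv q.symm
end

section
/- Let A = k[x,y] be the polynomial algebra, G = ⟨σ⟩ the cyclic group of order 2 acting on A by σ(x) = −x, σ(y) = −y (i.e., σ acts by −1 on the degree-1 part). Let H = (kG)* and view A as a right H-comodule algebra. Then A^{coH} = ⊕_{n≥0} A_{2n} (the even part of A), and the cokernel of the canonical map β : A ⊗_{A^{coH}} A → A ⊗ H is 1-dimensional; in particular A/A^{coH} is a right H-dense Galois extension. -/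
open TensorProduct MvPolynomial

section Aux

variable {k : Type} [Field k]

lemma neg_X_prod (d : Fin 2 →₀ ℕ) :
    (d.prod fun i e => (-(X i : MvPolynomial (Fin 2) k)) ^ e)
      = C ((-1 : k) ^ d.degree) * d.prod fun i e => (X i : MvPolynomial (Fin 2) k) ^ e := by
  rw [Finsupp.prod, Finsupp.prod, Finsupp.degree_apply, ← Finset.prod_pow_eq_pow_sum, map_prod,
    ← Finset.prod_mul_distrib]
  refine Finset.prod_congr rfl fun i _ => ?_
  rw [neg_pow, map_pow, map_neg, map_one]

lemma sigma_monomial (d : Fin 2 →₀ ℕ) (c : k) :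
    aeval (fun i : Fin 2 => -(X i : MvPolynomial (Fin 2) k)) (monomial d c)
      = (-1 : k) ^ d.degree • monomial d c := by
  rw [aeval_monomial, neg_X_prod, smul_eq_C_mul, monomial_eq, algebraMap_eq]
  ring

lemma sigma_homog {n : ℕ} {p : MvPolynomial (Fin 2) k} (hp : p.IsHomogeneous n) :
    aeval (fun i : Fin 2 => -(X i : MvPolynomial (Fin 2) k)) p = (-1 : k) ^ n • p := by
  conv_lhs => rw [p.as_sum]
  rw [map_sum]
  conv_rhs => rw [p.as_sum, Finset.smul_sum]
  refine Finset.sum_congr rfl fun d hd => ?_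
  have h1 : d.degree = n := by
    rw [Finsupp.degree_eq_weight_one]; exact hp (mem_support_iff.mp hd)
  rw [sigma_monomial, h1]

lemma sigma_component (a : MvPolynomial (Fin 2) k) (n : ℕ) :
    homogeneousComponent n (aeval (fun i : Fin 2 => -(X i : MvPolynomial (Fin 2) k)) a)
      = (-1 : k) ^ n • homogeneousComponent n a := by
  conv_lhs => rw [← a.sum_homogeneousComponent]
  rw [map_sum, map_sum]
  have h1 : ∀ i ∈ Finset.range (a.totalDegree + 1),
      homogeneousComponent n (aeval (fun i : Fin 2 => -(X i : MvPolynomial (Fin 2) k))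
        (homogeneousComponent i a))
      = if i = n then (-1 : k) ^ n • homogeneousComponent n a else 0 := by
    intro i _
    rw [sigma_homog (homogeneousComponent_isHomogeneous i a), map_smul,
      homogeneousComponent_of_mem
        ((mem_homogeneousSubmodule _ _).mpr (homogeneousComponent_isHomogeneous i a))]
    by_cases h : i = n
    · subst h; simp
    · simp [Ne.symm h, h]
  rw [Finset.sum_congr rfl h1, Finset.sum_ite_eq' (Finset.range (a.totalDegree + 1))]
  split_ifs with h
  · rfl
  · rw [Finset.mem_range, not_lt] at h
    rw [homogeneousComponent_eq_zero _ _ (Nat.lt_of_succ_le h), smul_zero]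

lemma even_smul_eq {n : ℕ} {p : MvPolynomial (Fin 2) k} : ((-1 : k) ^ (2 * n)) • p = p := by
  rw [pow_mul, neg_one_sq, one_pow, one_smul]

theorem part1 [CharZero k]
    (σa : MvPolynomial (Fin 2) k →ₐ[k] MvPolynomial (Fin 2) k)
    (hσ : σa = aeval fun i : Fin 2 => -(X i : MvPolynomial (Fin 2) k)) :
    ∀ a : MvPolynomial (Fin 2) k, σa a = a ↔
      a ∈ ⨆ n : ℕ, homogeneousSubmodule (Fin 2) k (2 * n) := by
  subst hσ
  intro a
  constructor
  · intro h
    have hodd : ∀ n, Odd n → homogeneousComponent n a = 0 := by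
      intro n hn
      have h1 : homogeneousComponent n a = (-1 : k) ^ n • homogeneousComponent n a := by
        conv_lhs => rw [← h, sigma_component]
      rw [hn.neg_one_pow, neg_one_smul] at h1
      have h2 : (2 : k) • homogeneousComponent n a = 0 := by
        rw [two_smul]
        nth_rewrite 1 [h1]
        exact neg_add_cancel _
      rcases smul_eq_zero.mp h2 with h3 | h3
      · exact absurd h3 two_ne_zero
      · exact h3
    rw [← a.sum_homogeneousComponent]
    refine Submodule.sum_mem _ fun i _ => ?_
    rcases Nat.even_or_odd i with he | ho
    · obtain ⟨m, hm⟩ := he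
      refine Submodule.mem_iSup_of_mem m ?_
      rw [mem_homogeneousSubmodule]
      have : 2 * m = i := by omega
      rw [this]
      exact homogeneousComponent_isHomogeneous i a
    · rw [hodd i ho]; exact Submodule.zero_mem _
  · intro h
    have hle : (⨆ n : ℕ, homogeneousSubmodule (Fin 2) k (2 * n)) ≤
        LinearMap.eqLocus (aeval fun i : Fin 2 =>
          -(X i : MvPolynomial (Fin 2) k) : MvPolynomial (Fin 2) k →ₐ[k] _).toLinearMap
          LinearMap.id := by
      refine iSup_le fun n p hp => ?_
      have := sigma_homog ((mem_homogeneousSubmodule _ _).mp hp)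
      simpa [LinearMap.mem_eqLocus, even_smul_eq] using this
    exact hle h

end Aux

noncomputable def ccL (k : Type) [Field k] : MvPolynomial (Fin 2) k →ₗ[k] k where
  toFun := constantCoeff
  map_add' p q := map_add _ p q
  map_smul' c p := by simp [smul_eq_C_mul]

theorem part2 (k : Type) [Field k] [CharZero k]
    (σa : MvPolynomial (Fin 2) k →ₐ[k] MvPolynomial (Fin 2) k)
    (hσ : σa = aeval fun i : Fin 2 => -(X i : MvPolynomial (Fin 2) k))
    (rel : Submodule k (MvPolynomial (Fin 2) k ⊗[k] MvPolynomial (Fin 2) k))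
    (β : ((MvPolynomial (Fin 2) k ⊗[k] MvPolynomial (Fin 2) k) ⧸ rel) →ₗ[k]
      (MvPolynomial (Fin 2) k × MvPolynomial (Fin 2) k))
    (hβ : ∀ a b : MvPolynomial (Fin 2) k,
      β (Submodule.Quotient.mk (a ⊗ₜ[k] b)) = (a * b, a * σa b)) :
    Module.finrank k
      ((MvPolynomial (Fin 2) k × MvPolynomial (Fin 2) k) ⧸ LinearMap.range β) = 1 := by
  set A := MvPolynomial (Fin 2) k
  set φ : (A × A) →ₗ[k] k :=
    (ccL k) ∘ₗ LinearMap.fst k A A - (ccL k) ∘ₗ LinearMap.snd k A A with hφdef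
  have hφ : ∀ u v : A, φ (u, v) = constantCoeff u - constantCoeff v := fun u v => rfl
  have hσX : ∀ i, σa (X i) = -(X i : A) := fun i => by rw [hσ, aeval_X]
  have hccσ : ∀ b : A, constantCoeff (σa b) = constantCoeff b := by
    have hc : (constantCoeff : A →+* k).comp (σa : A →+* A) = constantCoeff := by
      apply ringHom_ext
      · intro c
        simp only [RingHom.comp_apply, RingHom.coe_coe, ← algebraMap_eq, AlgHom.commutes]
      · intro i
        simp [hσX i]
    intro b
    simpa using RingHom.congr_fun hc b
  have hker : LinearMap.range β = LinearMap.ker φ := by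
    apply le_antisymm
    · rintro x hx
      obtain ⟨q, rfl⟩ := hx
      obtain ⟨t, rfl⟩ := Submodule.Quotient.mk_surjective rel q
      rw [LinearMap.mem_ker]
      induction t using TensorProduct.induction_on with
      | zero => simp
      | tmul a b => rw [hβ, hφ, map_mul, map_mul, hccσ b, sub_self]
      | add x y hx hy =>
          rw [Submodule.Quotient.mk_add, map_add, map_add, hx, hy, add_zero]
    · rintro ⟨u, v⟩ hx
      rw [LinearMap.mem_ker, hφ, sub_eq_zero] at hx
      set f : A := (2:k)⁻¹ • (u + v) with hf
      set g : A := (2:k)⁻¹ • (u - v) with hg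
      have hgcc : constantCoeff g = 0 := by
        rw [hg, smul_eq_C_mul, map_mul, constantCoeff_C, map_sub, hx, sub_self, mul_zero]
      have hgspan : g ∈ Ideal.span {(X 0 : A), X 1} := by
        have h1 : g ∈ Ideal.span (X '' (Set.univ : Set (Fin 2)) : Set A) := by
          rw [mem_ideal_span_X_image]
          intro m hm
          by_contra hc
          push_neg at hc
          have hm0 : m = 0 := Finsupp.ext fun i => hc i (Set.mem_univ i)
          have := mem_support_iff.mp hm
          rw [hm0] at this
          exact this hgcc
        have himg : (X '' (Set.univ : Set (Fin 2)) : Set A) = {X 0, X 1} := by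
          rw [Set.image_univ]
          ext p
          constructor
          · rintro ⟨i, rfl⟩
            fin_cases i <;> simp
          · rintro (rfl | rfl)
            exacts [⟨0, rfl⟩, ⟨1, rfl⟩]
        rwa [himg] at h1
      obtain ⟨p, q, hpq⟩ := Ideal.mem_span_pair.mp hgspan
      refine ⟨Submodule.Quotient.mk (f ⊗ₜ[k] 1 + p ⊗ₜ[k] X 0 + q ⊗ₜ[k] X 1), ?_⟩
      have hfg1 : f + g = u := by
        rw [hf, hg, smul_add, smul_sub]
        match_scalars <;> norm_num
      have hfg2 : f - g = v := by
        rw [hf, hg, smul_add, smul_sub]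
        match_scalars <;> norm_num
      rw [Submodule.Quotient.mk_add, Submodule.Quotient.mk_add, map_add, map_add,
        hβ, hβ, hβ, map_one, hσX, hσX, Prod.mk_add_mk, Prod.mk_add_mk, Prod.mk.injEq]
      constructor
      · rw [mul_one, add_assoc, hpq, hfg1]
      · rw [mul_one, mul_neg, mul_neg, add_assoc, ← neg_add, ← sub_eq_add_neg, hpq, hfg2]
  have hsurj : Function.Surjective φ := by
    intro c
    exact ⟨(C c, 0), by rw [hφ, constantCoeff_C, map_zero, sub_zero]⟩
  have e := (Submodule.quotEquivOfEq _ _ hker).trans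
    (LinearMap.quotKerEquivOfSurjective φ hsurj)
  rw [e.finrank_eq, Module.finrank_self]

/-- Let `A = k[x,y]` with the cyclic group `G = ⟨σ⟩` of order 2 acting by `σ(x) = −x`,
`σ(y) = −y`, and let `H = (kG)*`, so that `A` is a right `H`-comodule algebra.  Then
`A^{coH} = A^G` is the even part `⊕_{n≥0} A_{2n}` of `A`, and the cokernel of the
canonical map `β : A ⊗_{A^{coH}} A → A ⊗ H` is `1`-dimensional (under the canonical
identification `A ⊗ H ≅ A × A` given by evaluation at the group elements `e, σ`, the map
`β` is `a ⊗ b ↦ (ab, a·σ(b))`); in particular `A/A^{coH}` is a right `H`-dense Galois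
extension. -/
theorem polynomial_dense_galois_example (k : Type) [Field k] [CharZero k]
    (σa : MvPolynomial (Fin 2) k →ₐ[k] MvPolynomial (Fin 2) k)
    (hσ : σa = aeval fun i : Fin 2 => -(X i : MvPolynomial (Fin 2) k))
    (rel : Submodule k (MvPolynomial (Fin 2) k ⊗[k] MvPolynomial (Fin 2) k))
    (hrel : rel = Submodule.span k {x | ∃ a b r : MvPolynomial (Fin 2) k,
      σa r = r ∧ x = (a * r) ⊗ₜ[k] b - a ⊗ₜ[k] (r * b)})
    (β : ((MvPolynomial (Fin 2) k ⊗[k] MvPolynomial (Fin 2) k) ⧸ rel) →ₗ[k]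
      (MvPolynomial (Fin 2) k × MvPolynomial (Fin 2) k))
    (hβ : ∀ a b : MvPolynomial (Fin 2) k,
      β (Submodule.Quotient.mk (a ⊗ₜ[k] b)) = (a * b, a * σa b)) :
    (∀ a : MvPolynomial (Fin 2) k, σa a = a ↔
      a ∈ ⨆ n : ℕ, homogeneousSubmodule (Fin 2) k (2 * n)) ∧
    Module.finrank k
      ((MvPolynomial (Fin 2) k × MvPolynomial (Fin 2) k) ⧸ LinearMap.range β) = 1 :=
  ⟨part1 σa hσ, part2 k σa hσ rel β hβ⟩
end

section
/- Let G be a group and A = ⊕_{g∈G} A_g a G-graded algebra such that each A_g is finitely generated as a left A_e-module. Suppose for every g ∈ G the quotient A_e/(A_g A_{g⁻¹}) is finite dimensional (and equals zero for all but finitely many g). Then for all g, h ∈ G, the quotient A_{gh}/(A_g A_h) is finite dimensional, and A_g A_h = A_{gh} for all but finitely many pairs (g, h) ∈ G × G. -/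
open Pointwise

/-- A quotient `M ⧸ (N ∩ M)` is finite dimensional iff `M` is contained in the sum of `N`
and a finite-dimensional subspace spanned by elements of `M`. -/
lemma quot_fd_iff {k A : Type} [Field k] [Ring A] [Algebra k A]
    (M N : Submodule k A) :
    FiniteDimensional k (M ⧸ N.comap M.subtype) ↔
      ∃ s : Finset A, (↑s : Set A) ⊆ (M : Set A) ∧
        M ≤ Submodule.span k (↑s : Set A) ⊔ N := by
  classical
  set P := N.comap M.subtype with hPdef
  constructor
  · intro hFD
    obtain ⟨t, ht⟩ := Module.finite_def.mp hFD
    choose f hf using P.mkQ_surjective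
    refine ⟨t.image (fun z => ((f z : M) : A)), ?_, ?_⟩
    · rintro x hx
      simp only [Finset.coe_image, Set.mem_image] at hx
      obtain ⟨z, _, rfl⟩ := hx
      exact (f z).2
    · intro x hx
      have hxt : P.mkQ ⟨x, hx⟩ ∈ Submodule.span k (↑t : Set (M ⧸ P)) := by
        rw [ht]; exact Submodule.mem_top
      have hsub : (↑t : Set (M ⧸ P)) ⊆ P.mkQ '' (f '' ↑t) := by
        intro z hz
        exact ⟨f z, ⟨z, hz, rfl⟩, hf z⟩
      have h1 : P.mkQ ⟨x, hx⟩ ∈ Submodule.map P.mkQ (Submodule.span k (f '' ↑t)) := by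
        rw [← Submodule.span_image]
        exact Submodule.span_mono hsub hxt
      obtain ⟨y, hy, hyx⟩ := Submodule.mem_map.mp h1
      have hyN : (y : A) - x ∈ N := by
        have : y - ⟨x, hx⟩ ∈ P := by
          rw [Submodule.mkQ_apply, Submodule.mkQ_apply] at hyx
          exact (Submodule.Quotient.eq P).mp hyx
        simpa [hPdef] using this
      have hyspan : (y : A) ∈
          Submodule.span k ((↑(t.image (fun z => ((f z : M) : A)))) : Set A) := by
        have h2 : M.subtype y ∈ Submodule.map M.subtype (Submodule.span k (f '' ↑t)) :=
          Submodule.mem_map_of_mem hy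
        rw [← Submodule.span_image] at h2
        have himg : M.subtype '' (f '' ↑t)
            = ((↑(t.image (fun z => ((f z : M) : A)))) : Set A) := by
          rw [Finset.coe_image, ← Set.image_comp]
          rfl
        rwa [himg] at h2
      refine Submodule.mem_sup.mpr ⟨(y : A), hyspan, x - (y : A), ?_, by abel⟩
      simpa using N.neg_mem hyN
  · rintro ⟨s, hsM, hle⟩
    have hspanM : Submodule.span k (↑s : Set A) ≤ M := Submodule.span_le.mpr hsM
    let θ : ↥(Submodule.span k (↑s : Set A)) →ₗ[k] M ⧸ P :=
      P.mkQ ∘ₗ Submodule.inclusion hspanM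
    have hsurj : Function.Surjective θ := by
      intro z
      obtain ⟨x, rfl⟩ := P.mkQ_surjective z
      obtain ⟨y, hy, n, hn, hyn⟩ := Submodule.mem_sup.mp (hle x.2)
      refine ⟨⟨y, hy⟩, ?_⟩
      have hmem : Submodule.inclusion hspanM ⟨y, hy⟩ - x ∈ P := by
        simp only [hPdef, Submodule.mem_comap]
        have : ((Submodule.inclusion hspanM ⟨y, hy⟩ - x : M) : A) = -n := by
          have hval : ((Submodule.inclusion hspanM ⟨y, hy⟩ : M) : A) = y := rfl
          push_cast [hval]
          rw [← hyn]
          abel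
        rw [Submodule.subtype_apply, this]
        exact N.neg_mem hn
      show P.mkQ (Submodule.inclusion hspanM ⟨y, hy⟩) = P.mkQ x
      rwa [Submodule.mkQ_apply, Submodule.mkQ_apply, Submodule.Quotient.eq]
    haveI : FiniteDimensional k ↥(Submodule.span k (↑s : Set A)) :=
      FiniteDimensional.span_of_finite k s.finite_toSet
    exact Module.Finite.of_surjective θ hsurj

/-- Let `G` be a group and `A = ⊕_{g∈G} A_g` a `G`-graded algebra with each `A_g` finitely
generated as a left `A_e`-module.  If `A_e/(A_g·A_{g⁻¹})` is finite-dimensional for every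
`g` and zero for all but finitely many `g`, then `A_{gh}/(A_g·A_h)` is finite-dimensional
for all `g, h ∈ G` and `A_g·A_h = A_{gh}` for all but finitely many pairs `(g, h)`. -/
theorem densely_graded_products
    (k A G : Type) [Field k] [CharZero k] [Ring A] [Algebra k A] [Group G] [DecidableEq G]
    (𝒜 : G → Submodule k A)
    (hone : (1 : A) ∈ 𝒜 (1 : G))
    (hmul : ∀ (g h : G) (a b : A), a ∈ 𝒜 g → b ∈ 𝒜 h → a * b ∈ 𝒜 (g * h))
    (hinternal : DirectSum.IsInternal 𝒜)
    (hfg : ∀ g : G, ∃ s : Finset A, (↑s : Set A) ⊆ 𝒜 g ∧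
      𝒜 (1 : G) * Submodule.span k (↑s : Set A) = 𝒜 g)
    (hdense_fin : ∀ g : G, FiniteDimensional k
      (↥(𝒜 (1 : G)) ⧸ Submodule.comap (𝒜 (1 : G)).subtype (𝒜 g * 𝒜 g⁻¹)))
    (hdense_cofin : {g : G | 𝒜 g * 𝒜 g⁻¹ ≠ 𝒜 (1 : G)}.Finite) :
    (∀ g h : G, FiniteDimensional k
      (↥(𝒜 (g * h)) ⧸ Submodule.comap (𝒜 (g * h)).subtype (𝒜 g * 𝒜 h))) ∧
    {p : G × G | 𝒜 p.1 * 𝒜 p.2 ≠ 𝒜 (p.1 * p.2)}.Finite := by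
  classical
  have hmul_le : ∀ g h : G, 𝒜 g * 𝒜 h ≤ 𝒜 (g * h) := fun g h =>
    Submodule.mul_le.mpr (fun a ha b hb => hmul g h a b ha hb)
  have hone_mul : ∀ g : G, 𝒜 (1 : G) * 𝒜 g = 𝒜 g := by
    intro g
    refine le_antisymm (by simpa using hmul_le 1 g) ?_
    intro a ha
    simpa using Submodule.mul_mem_mul hone ha
  have hmul_one : ∀ g : G, 𝒜 g * 𝒜 (1 : G) = 𝒜 g := by
    intro g
    refine le_antisymm (by simpa using hmul_le g 1) ?_
    intro a ha
    simpa using Submodule.mul_mem_mul ha hone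
  have case1 : ∀ g h : G, 𝒜 g * 𝒜 g⁻¹ = 𝒜 (1 : G) → 𝒜 g * 𝒜 h = 𝒜 (g * h) := by
    intro g h hg
    refine le_antisymm (hmul_le g h) ?_
    calc 𝒜 (g * h) = (𝒜 g * 𝒜 g⁻¹) * 𝒜 (g * h) := by rw [hg, hone_mul]
      _ = 𝒜 g * (𝒜 g⁻¹ * 𝒜 (g * h)) := mul_assoc _ _ _
      _ ≤ 𝒜 g * 𝒜 h :=
          mul_le_mul' le_rfl (by simpa using hmul_le g⁻¹ (g * h))
  have case2 : ∀ g h : G, 𝒜 h⁻¹ * 𝒜 h = 𝒜 (1 : G) → 𝒜 g * 𝒜 h = 𝒜 (g * h) := by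
    intro g h hh
    refine le_antisymm (hmul_le g h) ?_
    calc 𝒜 (g * h) = 𝒜 (g * h) * (𝒜 h⁻¹ * 𝒜 h) := by rw [hh, hmul_one]
      _ = (𝒜 (g * h) * 𝒜 h⁻¹) * 𝒜 h := (mul_assoc _ _ _).symm
      _ ≤ 𝒜 g * 𝒜 h :=
          mul_le_mul' (by simpa using hmul_le (g * h) h⁻¹) le_rfl
  constructor
  · intro g h
    obtain ⟨sV, hsV, hVle⟩ :=
      (quot_fd_iff (𝒜 (1 : G)) (𝒜 g * 𝒜 g⁻¹)).mp (hdense_fin g)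
    obtain ⟨s, hs, hspan⟩ := hfg (g * h)
    refine (quot_fd_iff (𝒜 (g * h)) (𝒜 g * 𝒜 h)).mpr ⟨sV * s, ?_, ?_⟩
    · rintro x hx
      rw [Finset.coe_mul] at hx
      obtain ⟨v, hv, a, ha, rfl⟩ := hx
      simpa using hmul 1 (g * h) v a (hsV hv) (hs ha)
    · have hss : Submodule.span k (↑s : Set A) ≤ 𝒜 (g * h) := Submodule.span_le.mpr hs
      calc 𝒜 (g * h) = 𝒜 (1 : G) * Submodule.span k (↑s : Set A) := hspan.symm
        _ ≤ (Submodule.span k (↑sV : Set A) ⊔ 𝒜 g * 𝒜 g⁻¹) * Submodule.span k (↑s : Set A) :=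
            mul_le_mul' hVle le_rfl
        _ = Submodule.span k (↑sV : Set A) * Submodule.span k (↑s : Set A)
              ⊔ (𝒜 g * 𝒜 g⁻¹) * Submodule.span k (↑s : Set A) := Submodule.sup_mul _ _ _
        _ ≤ Submodule.span k (↑(sV * s) : Set A) ⊔ 𝒜 g * 𝒜 h := by
            apply sup_le_sup
            · rw [Finset.coe_mul, Submodule.span_mul_span]
            · calc (𝒜 g * 𝒜 g⁻¹) * Submodule.span k (↑s : Set A)
                  = 𝒜 g * (𝒜 g⁻¹ * Submodule.span k (↑s : Set A)) := mul_assoc _ _ _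
                _ ≤ 𝒜 g * (𝒜 g⁻¹ * 𝒜 (g * h)) :=
                    mul_le_mul' le_rfl (mul_le_mul' le_rfl hss)
                _ ≤ 𝒜 g * 𝒜 h :=
                    mul_le_mul' le_rfl (by simpa using hmul_le g⁻¹ (g * h))
  · have hS' : {h : G | 𝒜 h⁻¹ * 𝒜 h ≠ 𝒜 (1 : G)}.Finite := by
      have heq : {h : G | 𝒜 h⁻¹ * 𝒜 h ≠ 𝒜 (1 : G)}
          = Inv.inv ⁻¹' {g : G | 𝒜 g * 𝒜 g⁻¹ ≠ 𝒜 (1 : G)} := by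
        ext h
        simp [inv_inv]
      rw [heq]
      exact hdense_cofin.preimage (Set.injOn_of_injective inv_injective)
    refine Set.Finite.subset (hdense_cofin.prod hS') ?_
    rintro ⟨g, h⟩ hbad
    simp only [Set.mem_setOf_eq] at hbad
    refine Set.mem_prod.mpr ⟨?_, ?_⟩
    · by_contra hg
      simp only [Set.mem_setOf_eq, not_not] at hg
      exact hbad (case1 g h hg)
    · by_contra hh
      simp only [Set.mem_setOf_eq, not_not] at hh
      exact hbad (case2 g h hh)
end

section
/- Let A = ⊕_{n≥0} A_n be a locally finite noetherian ℕ-graded algebra and d ≥ 1. Suppose there exists p > 0 such that for all n ≥ p and all 0 ≤ s ≤ d−1, A_{nd} = Σ_{i+j=n−1} A_{id+s} · A_{jd+d−s}. Then for every finitely generated ℤ-graded right A-module M, if the Veronese submodule M^{(d)} = ⊕_{n∈ℤ} M_{nd} is finite dimensional, then M is finite dimensional. -/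
open MulOpposite

section VeroneseAux

variable {k A M : Type} [Field k] [Ring A] [Algebra k A] [AddCommGroup M]
  [Module Aᵐᵒᵖ M] [Module k M] [IsScalarTower k Aᵐᵒᵖ M]

/-- Right multiplication by elements of `A` on `y : M`, as a `k`-linear map. -/
def veroneseRsmul (y : M) : A →ₗ[k] M where
  toFun a := op a • y
  map_add' a b := by simp only [op_add, add_smul]
  map_smul' r a := by simp only [MulOpposite.op_smul, RingHom.id_apply, smul_assoc]

@[simp] lemma veroneseRsmul_apply (y : M) (a : A) :
    veroneseRsmul (k := k) y a = op a • y := rfl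

/-- The "integer-indexed" graded pieces of `A`. -/
def veroneseAZ (𝒜 : ℕ → Submodule k A) : ℤ → Submodule k A :=
  fun z => if 0 ≤ z then 𝒜 z.toNat else ⊥

lemma veroneseAZ_natCast (𝒜 : ℕ → Submodule k A) (n : ℕ) :
    veroneseAZ 𝒜 (n : ℤ) = 𝒜 n := by
  simp [veroneseAZ]

lemma veroneseAZ_neg (𝒜 : ℕ → Submodule k A) {z : ℤ} (hz : z < 0) :
    veroneseAZ 𝒜 z = ⊥ := by
  simp [veroneseAZ, not_le.mpr hz]

instance veroneseAZ_findim (𝒜 : ℕ → Submodule k A) [h : ∀ n, FiniteDimensional k (𝒜 n)]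
    (z : ℤ) : FiniteDimensional k (veroneseAZ 𝒜 z) := by
  rw [veroneseAZ]
  rcases le_or_gt 0 z with hz | hz
  · rw [if_pos hz]
    exact h _
  · rw [if_neg (not_le.mpr hz)]
    infer_instance

end VeroneseAux

section Gproj

variable {k N : Type} [Field k] [AddCommGroup N] [Module k N]
  {ι : Type} [DecidableEq ι] {ℳ : ι → Submodule k N}

/-- Projection onto a graded piece coming from an internal direct sum decomposition. -/
noncomputable def gproj (h : DirectSum.IsInternal ℳ) (c : ι) : N →ₗ[k] ℳ c :=
  (DirectSum.component k ι (fun i => ↥(ℳ i)) c).comp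
    (LinearEquiv.ofBijective (DirectSum.coeLinearMap ℳ) h).symm.toLinearMap

lemma gproj_apply (h : DirectSum.IsInternal ℳ) (c : ι) (x : N) :
    gproj h c x = (LinearEquiv.ofBijective (DirectSum.coeLinearMap ℳ) h).symm x c := rfl

lemma gproj_mem_same (h : DirectSum.IsInternal ℳ) {c : ι} {x : N} (hx : x ∈ ℳ c) :
    (gproj h c x : N) = x := by
  rw [gproj_apply, h.ofBijective_coeLinearMap_of_mem hx]

lemma gproj_mem_ne (h : DirectSum.IsInternal ℳ) {c c' : ι} (hne : c ≠ c') {x : N}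
    (hx : x ∈ ℳ c) : gproj h c' x = 0 := by
  rw [gproj_apply, h.ofBijective_coeLinearMap_of_mem_ne hne hx]

end Gproj
/-- Let `A = ⊕_{n≥0} A_n` be a locally finite noetherian `ℕ`-graded algebra and `d ≥ 1`.
Suppose there is `p > 0` such that `A_{nd} = Σ_{i+j=n−1} A_{id+s}·A_{jd+d−s}` for all
`n ≥ p` and `0 ≤ s ≤ d−1`.  Then for every finitely generated `ℤ`-graded right `A`-module
`M`, if the Veronese submodule `M^{(d)} = ⊕_{n∈ℤ} M_{nd}` is finite-dimensional, then `M`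
is finite-dimensional. -/
theorem veronese_finite_of_condition
    (k A : Type) [Field k] [CharZero k] [Ring A] [Algebra k A]
    [IsNoetherianRing A] [IsNoetherianRing Aᵐᵒᵖ]
    (𝒜 : ℕ → Submodule k A)
    (hone : (1 : A) ∈ 𝒜 0)
    (hmul : ∀ (i j : ℕ) (a b : A), a ∈ 𝒜 i → b ∈ 𝒜 j → a * b ∈ 𝒜 (i + j))
    (hinternal : DirectSum.IsInternal 𝒜)
    (hlocfin : ∀ n : ℕ, FiniteDimensional k (𝒜 n))
    (d : ℕ) (hd : 1 ≤ d)
    (hcond : ∃ p : ℕ, 0 < p ∧ ∀ n ≥ p, ∀ s < d,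
      𝒜 (n * d) = ∑ i ∈ Finset.range n, 𝒜 (i * d + s) * 𝒜 ((n - 1 - i) * d + (d - s)))
    (M : Type) [AddCommGroup M] [Module Aᵐᵒᵖ M] [Module k M] [IsScalarTower k Aᵐᵒᵖ M]
    [Module.Finite Aᵐᵒᵖ M]
    (ℳ : ℤ → Submodule k M)
    (hMinternal : DirectSum.IsInternal ℳ)
    (hMgr : ∀ (i : ℤ) (n : ℕ) (m : M) (a : A),
      m ∈ ℳ i → a ∈ 𝒜 n → op a • m ∈ ℳ (i + n))
    (hver : FiniteDimensional k (⨆ n : ℤ, ℳ (n * d) : Submodule k M)) :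
    FiniteDimensional k M := by
  classical
  obtain ⟨p, hp, hcond⟩ := hcond
  haveI := hlocfin
  have hd0 : (d : ℤ) ≠ 0 := by exact_mod_cast Nat.one_le_iff_ne_zero.mp hd
  have hdZ : (0 : ℤ) < (d : ℤ) := by exact_mod_cast hd
  have hAtop : (⨆ n, 𝒜 n) = ⊤ := hinternal.submodule_iSup_eq_top
  have hMtop : (⨆ c, ℳ c) = ⊤ := hMinternal.submodule_iSup_eq_top
  -- Step 0: the nonzero Veronese pieces are finitely many.
  have hfin : {n : ℤ | ℳ (n * d) ≠ ⊥}.Finite := by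
    by_contra hinf
    set I := {n : ℤ | ℳ (n * (d : ℤ)) ≠ ⊥} with hI
    have hind : iSupIndep (fun n : I => ℳ ((n : ℤ) * d)) :=
      (hMinternal.submodule_iSupIndep.comp
        (mul_left_injective₀ hd0)).comp Subtype.coe_injective
    have hne : ∀ n : I, ∃ v, v ∈ ℳ ((n : ℤ) * d) ∧ v ≠ 0 := by
      intro n
      have h2 : ℳ ((n : ℤ) * d) ≠ ⊥ := n.2
      rw [Submodule.ne_bot_iff] at h2
      obtain ⟨v, hv, hv0⟩ := h2
      exact ⟨v, hv, hv0⟩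
    choose v hv hv0 using hne
    have hLI : LinearIndependent k v := hind.linearIndependent _ hv hv0
    set V : Submodule k M := ⨆ n : ℤ, ℳ (n * d) with hV
    have hvV : ∀ n : I, v n ∈ V := fun n =>
      (le_iSup (fun n : ℤ => ℳ (n * d)) (n : ℤ)) (hv n)
    let v' : I → V := fun n => ⟨v n, hvV n⟩
    have hLI' : LinearIndependent k v' :=
      LinearIndependent.of_comp V.subtype (by exact hLI)
    haveI : Module.Finite k V := hver
    haveI : Finite I := hLI'.finite
    exact hinf (Set.toFinite I)
  obtain ⟨N0, hN0⟩ := hfin.bddAbove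
  set N : ℤ := N0 + 1 with hNdef
  have hN : ∀ n : ℤ, N ≤ n → ℳ (n * d) = ⊥ := by
    intro n hn
    by_contra h
    have := hN0 (show n ∈ {n : ℤ | ℳ (n * (d : ℤ)) ≠ ⊥} from h)
    omega
  -- Step 1: high-degree homogeneous elements annihilate high Veronese pieces of A.
  have SOne : ∀ c : ℤ, N * d ≤ c → ∀ x ∈ ℳ c, ∀ m : ℕ, p ≤ m →
      ∀ b ∈ 𝒜 (m * d), op b • x = 0 := by
    intro c hc x hx m hm b hb
    have hqr : (d : ℤ) * (c / d) + c % d = c := Int.mul_ediv_add_emod c d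
    have hq : N ≤ c / d := (Int.le_ediv_iff_mul_le hdZ).mpr hc
    have hr0 : 0 ≤ c % d := Int.emod_nonneg c hd0
    have hrd : c % d < d := Int.emod_lt_of_pos c hdZ
    set s : ℕ := (c % d).toNat with hsdef
    have hsc : (s : ℤ) = c % d := Int.toNat_of_nonneg hr0
    by_cases hs0 : s = 0
    · have hr0' : c % (d : ℤ) = 0 := by rw [← hsc, hs0]; simp
      have hcq : c = (c / d) * d := by linear_combination (-1 : ℤ) * hqr + hr0'
      have hbot : ℳ c = ⊥ := by rw [hcq]; exact hN _ hq
      have : x = 0 := by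
        rw [hbot, Submodule.mem_bot] at hx
        exact hx
      rw [this, smul_zero]
    · have hs1 : 1 ≤ s := Nat.one_le_iff_ne_zero.mpr hs0
      have hsd : s < d := by
        have : (s : ℤ) < d := by rw [hsc]; exact hrd
        exact_mod_cast this
      have hds : d - s < d := by omega
      have hsub : d - (d - s) = s := by omega
      have hcast : ∀ i : ℕ, ((i * d + (d - s) : ℕ) : ℤ) = (i : ℤ) * d + ((d : ℤ) - s) := by
        intro i
        push_cast [Nat.cast_sub hsd.le]
        ring
      have hA := hcond m hm (d - s) hds
      rw [hsub] at hA
      rw [hA] at hb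
      have hker : (∑ i ∈ Finset.range m, 𝒜 (i * d + (d - s)) * 𝒜 ((m - 1 - i) * d + s)) ≤
          LinearMap.ker (veroneseRsmul (k := k) x) := by
        apply Finset.sum_induction _ (fun S => S ≤ LinearMap.ker (veroneseRsmul (k := k) x))
        · intro a b ha hb
          rw [Submodule.add_eq_sup]
          exact sup_le ha hb
        · rw [Submodule.zero_eq_bot]
          exact bot_le
        · intro i _
          apply Submodule.mul_le.mpr
          intro u hu v hv
          rw [LinearMap.mem_ker, veroneseRsmul_apply, op_mul, mul_smul]
          have hu' : op u • x ∈ ℳ (c + ((i * d + (d - s) : ℕ) : ℤ)) :=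
            hMgr _ _ _ _ hx hu
          have he : c + ((i * d + (d - s) : ℕ) : ℤ) = (c / d + (i : ℤ) + 1) * d := by
            rw [hcast i]
            linear_combination (-1 : ℤ) * hqr - hsc
          rw [he, hN (c / d + (i : ℤ) + 1) (by omega), Submodule.mem_bot] at hu'
          rw [hu', smul_zero]
      have := hker hb
      rw [LinearMap.mem_ker, veroneseRsmul_apply] at this
      exact this
  -- Key projection lemma.
  have hL5 : ∀ (e : ℤ) (y : M), y ∈ ℳ e → ∀ (c : ℤ) (b : A),
      ((gproj hMinternal c) (op b • y) : M) ∈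
        Submodule.map (veroneseRsmul (k := k) y) (veroneseAZ 𝒜 (c - e)) := by
    intro e y hy c b
    set W := Submodule.map (veroneseRsmul (k := k) y) (veroneseAZ 𝒜 (c - e)) with hW
    set Φ : A →ₗ[k] M :=
      (((ℳ c).subtype.comp (gproj hMinternal c)).comp (veroneseRsmul (k := k) y)) with hΦ
    have hsuff : (⊤ : Submodule k A) ≤ Submodule.comap Φ W := by
      rw [← hAtop]
      apply iSup_le
      intro n b' hb'
      rw [Submodule.mem_comap]
      show ((gproj hMinternal c) (op b' • y) : M) ∈ W
      have hmem : op b' • y ∈ ℳ (e + n) := hMgr e n y b' hy hb'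
      by_cases hcc : e + (n : ℤ) = c
      · have hx' : op b' • y ∈ ℳ c := hcc ▸ hmem
        rw [gproj_mem_same hMinternal hx']
        have hce : c - e = (n : ℤ) := by omega
        refine Submodule.mem_map_of_mem ?_
        rw [hce, veroneseAZ_natCast]
        exact hb'
      · rw [gproj_mem_ne hMinternal hcc hmem]
        simp only [ZeroMemClass.coe_zero]
        exact W.zero_mem
    have := hsuff (Submodule.mem_top (x := b))
    rw [Submodule.mem_comap] at this
    exact this
  -- Main structural lemma.
  have hLA : ∀ (F : Finset M) (dg : M → ℤ), (∀ y ∈ F, y ∈ ℳ (dg y)) →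
      ∀ (c : ℤ) (x : M), x ∈ ℳ c → x ∈ Submodule.span Aᵐᵒᵖ (F : Set M) →
      x ∈ F.sup (fun y => Submodule.map (veroneseRsmul (k := k) y)
        (veroneseAZ 𝒜 (c - dg y))) := by
    intro F dg hF c x hxc hx
    obtain ⟨f, -, hf⟩ := Submodule.mem_span_finset.mp hx
    have hx2 : x = ∑ y ∈ F, ((gproj hMinternal c) (f y • y) : M) := by
      conv_lhs => rw [← gproj_mem_same hMinternal hxc]
      rw [← hf, map_sum]
      push_cast
      rfl
    rw [hx2]
    apply Submodule.sum_mem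
    intro y hy
    have h5 := hL5 (dg y) y (hF y hy) c ((f y).unop)
    rw [op_unop] at h5
    have hle := Finset.le_sup (f := fun z => Submodule.map (veroneseRsmul (k := k) z)
      (veroneseAZ 𝒜 (c - dg z))) hy
    exact hle h5
  -- A degree-choosing function.
  obtain ⟨dg, hdg⟩ : ∃ dg : M → ℤ, ∀ y : M, (∃ c : ℤ, y ∈ ℳ c) → y ∈ ℳ (dg y) := by
    have h : ∀ y : M, ∃ e : ℤ, ((∃ c : ℤ, y ∈ ℳ c) → y ∈ ℳ e) := by
      intro y
      by_cases h : ∃ c : ℤ, y ∈ ℳ c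
      · exact ⟨h.choose, fun _ => h.choose_spec⟩
      · exact ⟨0, fun hc => absurd hc h⟩
    choose dg hdg using h
    exact ⟨dg, hdg⟩
  -- Homogeneous finite generating set for M.
  obtain ⟨G, hG⟩ := (Module.Finite.fg_top : (⊤ : Submodule Aᵐᵒᵖ M).FG)
  have hHS : ∀ g : M, g ∈ Submodule.span Aᵐᵒᵖ (⋃ c : ℤ, (ℳ c : Set M)) := by
    intro g
    have h1 : g ∈ (⨆ c, ℳ c : Submodule k M) := hMtop ▸ Submodule.mem_top
    rw [Submodule.iSup_eq_span] at h1
    exact Submodule.span_le_restrictScalars k Aᵐᵒᵖ _ h1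
  choose T hT1 hT2 using fun g : G =>
    Submodule.mem_span_finite_of_mem_span (hHS (g : M))
  set Fgen : Finset M := G.attach.biUnion (fun g => T g) with hFgenDef
  have hFgenS : ∀ y ∈ Fgen, ∃ c : ℤ, y ∈ ℳ c := by
    intro y hy
    rw [hFgenDef, Finset.mem_biUnion] at hy
    obtain ⟨g, _, hgT⟩ := hy
    have := hT1 g hgT
    rw [Set.mem_iUnion] at this
    obtain ⟨c, hc⟩ := this
    exact ⟨c, hc⟩
  have hFgenTop : Submodule.span Aᵐᵒᵖ (Fgen : Set M) = ⊤ := by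
    rw [eq_top_iff, ← hG]
    apply Submodule.span_le.mpr
    intro g hg
    have := hT2 ⟨g, hg⟩
    refine Submodule.span_mono ?_ this
    exact_mod_cast Finset.coe_subset.mpr
      (Finset.subset_biUnion_of_mem (fun g => T g) (Finset.mem_attach _ ⟨g, hg⟩))
  have hFgenHom : ∀ y ∈ Fgen, y ∈ ℳ (dg y) := fun y hy => hdg y (hFgenS y hy)
  -- Each graded piece of M is contained in a finite-dimensional subspace.
  have hMc : ∀ c : ℤ, ℳ c ≤ Fgen.sup (fun y => Submodule.map (veroneseRsmul (k := k) y)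
      (veroneseAZ 𝒜 (c - dg y))) := by
    intro c x hx
    exact hLA Fgen dg hFgenHom c x hx (by rw [hFgenTop]; exact Submodule.mem_top)
  haveI hMcfin : ∀ c : ℤ, FiniteDimensional k (ℳ c) := by
    intro c
    exact Submodule.finiteDimensional_of_le (hMc c)
  -- Lower bound.
  set Cmin : ℤ := (insert (0 : ℤ) (Fgen.image dg)).min' (Finset.insert_nonempty _ _) with hCmin
  have hbdd : ∀ c : ℤ, c < Cmin → ℳ c = ⊥ := by
    intro c hc
    rw [eq_bot_iff]
    refine le_trans (hMc c) ?_
    rw [le_bot_iff, Finset.sup_eq_bot_iff]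
    intro y hy
    have h1 : Cmin ≤ dg y :=
      Finset.min'_le _ _ (Finset.mem_insert_of_mem (Finset.mem_image_of_mem dg hy))
    rw [veroneseAZ_neg 𝒜 (by omega : c - dg y < 0), Submodule.map_bot]
  -- Residue classes eventually vanish.
  have hres : ∀ t : ℕ, ∃ Ct : ℤ, ∀ c : ℤ, Ct ≤ c → c % (d : ℤ) = (t : ℤ) → ℳ c = ⊥ := by
    intro t
    set SS : Set M := ⋃ (c : ℤ) (_ : N * d ≤ c ∧ c % (d : ℤ) = (t : ℤ)), (ℳ c : Set M)
      with hSSdef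
    haveI : IsNoetherian Aᵐᵒᵖ M := isNoetherian_of_isNoetherianRing_of_finite Aᵐᵒᵖ M
    obtain ⟨G2, hG2⟩ := IsNoetherian.noetherian (Submodule.span Aᵐᵒᵖ SS)
    choose T2 hT2a hT2b using fun g : G2 =>
      Submodule.mem_span_finite_of_mem_span
        (show (g : M) ∈ Submodule.span Aᵐᵒᵖ SS from hG2 ▸ Submodule.subset_span g.2)
    set F : Finset M := G2.attach.biUnion (fun g => T2 g) with hFdef
    have hFsub : ∀ y ∈ F, ∃ c : ℤ, ((N * d ≤ c ∧ c % (d : ℤ) = (t : ℤ)) ∧ y ∈ ℳ c) := by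
      intro y hy
      rw [hFdef, Finset.mem_biUnion] at hy
      obtain ⟨g, _, hgT⟩ := hy
      have := hT2a g hgT
      rw [hSSdef] at this
      simp only [Set.mem_iUnion, SetLike.mem_coe, exists_prop] at this
      exact this
    have hFspan : Submodule.span Aᵐᵒᵖ (F : Set M) = Submodule.span Aᵐᵒᵖ SS := by
      apply le_antisymm
      · apply Submodule.span_le.mpr
        intro y hy
        exact Submodule.subset_span (by
          obtain ⟨c, hc1, hc2⟩ := hFsub y hy
          rw [hSSdef]
          exact Set.mem_iUnion₂.mpr ⟨c, hc1, hc2⟩)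
      · rw [← hG2]
        apply Submodule.span_le.mpr
        intro g hg
        refine Submodule.span_mono ?_ (hT2b ⟨g, hg⟩)
        exact_mod_cast Finset.coe_subset.mpr
          (Finset.subset_biUnion_of_mem (fun g => T2 g) (Finset.mem_attach _ ⟨g, hg⟩))
    obtain ⟨dg2, hdg2⟩ : ∃ dg2 : M → ℤ,
        ∀ y : M, (∃ c : ℤ, ((N * d ≤ c ∧ c % (d : ℤ) = (t : ℤ)) ∧ y ∈ ℳ c)) →
          ((N * d ≤ dg2 y ∧ dg2 y % (d : ℤ) = (t : ℤ)) ∧ y ∈ ℳ (dg2 y)) := by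
      have h : ∀ y : M, ∃ e : ℤ,
          ((∃ c : ℤ, ((N * d ≤ c ∧ c % (d : ℤ) = (t : ℤ)) ∧ y ∈ ℳ c)) →
            ((N * d ≤ e ∧ e % (d : ℤ) = (t : ℤ)) ∧ y ∈ ℳ e)) := by
        intro y
        by_cases h : ∃ c : ℤ, ((N * d ≤ c ∧ c % (d : ℤ) = (t : ℤ)) ∧ y ∈ ℳ c)
        · exact ⟨h.choose, fun _ => h.choose_spec⟩
        · exact ⟨0, fun hc => absurd hc h⟩
      choose dg2 hdg2 using h
      exact ⟨dg2, hdg2⟩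
    refine ⟨(insert ((N : ℤ) * d) (F.image (fun y => dg2 y + (p : ℤ) * d))).max'
      (Finset.insert_nonempty _ _), ?_⟩
    intro c hc hct
    have hNc : N * d ≤ c :=
      le_trans (Finset.le_max' _ _ (Finset.mem_insert_self _ _)) hc
    rw [eq_bot_iff]
    intro x hx
    have hxSS : x ∈ SS := by
      rw [hSSdef]
      exact Set.mem_iUnion₂.mpr ⟨c, ⟨hNc, hct⟩, hx⟩
    have hxsp : x ∈ Submodule.span Aᵐᵒᵖ (F : Set M) := by
      rw [hFspan]
      exact Submodule.subset_span hxSS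
    have hkey := hLA F dg2 (fun y hy => (hdg2 y (hFsub y hy)).2) c x hx hxsp
    have hzero : (F.sup (fun y => Submodule.map (veroneseRsmul (k := k) y)
        (veroneseAZ 𝒜 (c - dg2 y)))) = ⊥ := by
      rw [Finset.sup_eq_bot_iff]
      intro y hy
      obtain ⟨⟨hdgN, hdgmod⟩, hdgmem⟩ := hdg2 y (hFsub y hy)
      have hcy : dg2 y + (p : ℤ) * d ≤ c :=
        le_trans (Finset.le_max' _ _ (Finset.mem_insert_of_mem
          (Finset.mem_image_of_mem (fun y => dg2 y + (p : ℤ) * d) hy))) hc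
      have hdvd : (d : ℤ) ∣ (c - dg2 y) := by
        apply Int.dvd_of_emod_eq_zero
        rw [Int.sub_emod, hct, hdgmod, sub_self, Int.zero_emod]
      obtain ⟨m', hm'⟩ := hdvd
      have hm'p : (p : ℤ) ≤ m' := by
        have h1 : (d : ℤ) * p ≤ d * m' := by linarith
        exact le_of_mul_le_mul_left h1 hdZ
      set m : ℕ := m'.toNat with hmdef
      have hmm : (m : ℤ) = m' := Int.toNat_of_nonneg (le_trans (by exact_mod_cast Nat.zero_le p) hm'p)
      have hpm : p ≤ m := by exact_mod_cast hmm ▸ hm'p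
      have hzeq : c - dg2 y = ((m * d : ℕ) : ℤ) := by push_cast; rw [hmm]; linarith
      rw [Submodule.eq_bot_iff]
      rintro z ⟨b, hb, rfl⟩
      rw [veroneseRsmul_apply]
      have hbA : b ∈ 𝒜 (m * d) := by
        rw [hzeq, veroneseAZ_natCast] at hb
        exact hb
      exact SOne (dg2 y) hdgN y hdgmem m hpm b hbA
    rw [hzero] at hkey
    exact hkey
  choose Ct hCt using hres
  have hdnonempty : (Finset.range d).Nonempty := Finset.nonempty_range_iff.mpr (by omega)
  set Cmax : ℤ := ((Finset.range d).image Ct).max' (hdnonempty.image _) with hCmax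
  have hCeq : ∀ c : ℤ, Cmax ≤ c → ℳ c = ⊥ := by
    intro c hc
    have h1 : 0 ≤ c % (d : ℤ) := Int.emod_nonneg c hd0
    have h2 : c % (d : ℤ) < d := Int.emod_lt_of_pos c hdZ
    set t : ℕ := (c % (d : ℤ)).toNat with htdef
    have htc : (t : ℤ) = c % (d : ℤ) := Int.toNat_of_nonneg h1
    have htd : t < d := by
      have : (t : ℤ) < d := htc ▸ h2
      exact_mod_cast this
    refine hCt t c (le_trans ?_ hc) htc.symm
    exact Finset.le_max' _ _ (Finset.mem_image_of_mem Ct (Finset.mem_range.mpr htd))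
  -- Assemble.
  set V : Submodule k M := (Finset.Icc Cmin Cmax).sup ℳ with hVdef
  haveI hVfin : FiniteDimensional k V := Submodule.finiteDimensional_finset_sup _ _
  have hVtop : (⊤ : Submodule k M) ≤ V := by
    rw [← hMtop]
    apply iSup_le
    intro c
    rcases lt_or_ge c Cmin with h | h
    · rw [hbdd c h]; exact bot_le
    rcases le_or_gt c Cmax with h2 | h2
    · exact Finset.le_sup (Finset.mem_Icc.mpr ⟨h, h2⟩)
    · rw [hCeq c h2.le]; exact bot_le
  have hVeq : V = ⊤ := le_antisymm le_top hVtop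
  haveI : FiniteDimensional k (⊤ : Submodule k M) := hVeq ▸ hVfin
  exact (Submodule.topEquiv : (⊤ : Submodule k M) ≃ₗ[k] M).finiteDimensional
end

section
/- Let A = ⊕_{n≥0} A_n be a locally finite noetherian ℕ-graded algebra such that there exists p > 0 with A_i A_j = A_{i+j} whenever i + j ≥ p. Then for every d ≥ 1, the condition of Theorem: there exists p' > 0 such that A_{nd} = Σ_{i+j=n−1} A_{id+s} A_{jd+d−s} for all n ≥ p' and 0 ≤ s ≤ d−1, is satisfied. -/
/-- Let `A = ⊕_{n≥0} A_n` be a locally finite noetherian `ℕ`-graded algebra such that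
`A_i·A_j = A_{i+j}` whenever `i + j ≥ p`, for some `p > 0`.  Then for every `d ≥ 1` there
is `p' > 0` such that `A_{nd} = Σ_{i+j=n−1} A_{id+s}·A_{jd+d−s}` for all `n ≥ p'` and
`0 ≤ s ≤ d−1`. -/
theorem veronese_condition_of_eventually_surjective_multiplication
    (k A : Type) [Field k] [CharZero k] [Ring A] [Algebra k A]
    [IsNoetherianRing A] [IsNoetherianRing Aᵐᵒᵖ]
    (𝒜 : ℕ → Submodule k A)
    (hone : (1 : A) ∈ 𝒜 0)
    (hmul : ∀ (i j : ℕ) (a b : A), a ∈ 𝒜 i → b ∈ 𝒜 j → a * b ∈ 𝒜 (i + j))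
    (hinternal : DirectSum.IsInternal 𝒜)
    (hlocfin : ∀ n : ℕ, FiniteDimensional k (𝒜 n))
    (hsurj : ∃ p : ℕ, 0 < p ∧ ∀ i j : ℕ, p ≤ i + j → 𝒜 i * 𝒜 j = 𝒜 (i + j)) :
    ∀ d : ℕ, 1 ≤ d → ∃ p' : ℕ, 0 < p' ∧ ∀ n ≥ p', ∀ s < d,
      𝒜 (n * d) = ∑ i ∈ Finset.range n, 𝒜 (i * d + s) * 𝒜 ((n - 1 - i) * d + (d - s)) := by
  obtain ⟨p, hp, hP⟩ := hsurj
  intro d hd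
  refine ⟨p, hp, fun n hn s hs => ?_⟩
  obtain ⟨m, rfl⟩ : ∃ m, n = m + 1 := ⟨n - 1, by omega⟩
  apply le_antisymm
  · have h1 : s + (m * d + (d - s)) = (m + 1) * d := by
      have : s ≤ d := hs.le
      rw [add_mul, one_mul]; omega
    have hkey : 𝒜 ((m + 1) * d) = 𝒜 s * 𝒜 (m * d + (d - s)) := by
      rw [← h1]
      refine (hP _ _ ?_).symm
      have h2 : p ≤ m + 1 := hn
      calc p ≤ m + 1 := h2
        _ ≤ (m + 1) * d := Nat.le_mul_of_pos_right _ hd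
        _ = s + (m * d + (d - s)) := h1.symm
    have hterm : 𝒜 ((m + 1) * d) = 𝒜 (0 * d + s) * 𝒜 ((m + 1 - 1 - 0) * d + (d - s)) := by
      simpa using hkey
    rw [hterm]
    exact Finset.single_le_sum (f := fun i => 𝒜 (i * d + s) * 𝒜 ((m + 1 - 1 - i) * d + (d - s)))
      (fun i _ => zero_le) (Finset.mem_range.mpr (Nat.succ_pos m))
  · refine Finset.sum_induction _ (· ≤ 𝒜 ((m + 1) * d)) ?_ ?_ ?_
    · intro a b ha hb
      rw [Submodule.add_eq_sup]
      exact sup_le ha hb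
    · exact bot_le
    · intro i hi
      rw [Finset.mem_range] at hi
      refine Submodule.mul_le.mpr fun a ha b hb => ?_
      have := hmul _ _ a b ha hb
      have heq : (i * d + s) + ((m + 1 - 1 - i) * d + (d - s)) = (m + 1) * d := by
        have h1 : i ≤ m := by omega
        have h2 : (m - i) * d = m * d - i * d := Nat.sub_mul m i d
        have h3 : i * d ≤ m * d := Nat.mul_le_mul_right d h1
        have h4 : (m + 1) * d = m * d + d := by ring
        have h5 : m + 1 - 1 - i = m - i := by omega
        have h6 : s ≤ d := hs.le
        rw [h5, h2, h4]; omega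
      rwa [heq] at this
end

section
/- Let R be a noetherian algebra and M a finitely generated right R-module with a minimal injective resolution 0 → M → I⁰ → I¹ → ⋯. If the right derived torsion functors satisfy R^i τ(M) = 0 for all i < d (where τ assigns to a module its largest torsion submodule, torsion meaning every cyclic submodule is finite dimensional), then I^i is torsion-free for all i < d, and consequently Ext^i_R(S, M) = 0 for all i < d and every finite-dimensional simple right R-module S. -/
section helpers
variable {k R : Type} [Field k] [Ring R] [Algebra k R]

private lemma fd_of_rs {X : Type} [AddCommGroup X] [Module Rᵐᵒᵖ X] [Module k X]
    [IsScalarTower k Rᵐᵒᵖ X] (p : Submodule Rᵐᵒᵖ X)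
    (h : FiniteDimensional k ↥(p.restrictScalars k)) : FiniteDimensional k ↥p :=
  Module.Finite.equiv ((Submodule.restrictScalarsEquiv k Rᵐᵒᵖ X p).restrictScalars k)

private lemma rs_of_fd {X : Type} [AddCommGroup X] [Module Rᵐᵒᵖ X] [Module k X]
    [IsScalarTower k Rᵐᵒᵖ X] (p : Submodule Rᵐᵒᵖ X)
    (h : FiniteDimensional k ↥p) : FiniteDimensional k ↥(p.restrictScalars k) :=
  Module.Finite.equiv ((Submodule.restrictScalarsEquiv k Rᵐᵒᵖ X p).restrictScalars k).symm

private lemma fd_sup {X : Type} [AddCommGroup X] [Module Rᵐᵒᵖ X] [Module k X]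
    [IsScalarTower k Rᵐᵒᵖ X] (N₁ N₂ : Submodule Rᵐᵒᵖ X)
    (h₁ : FiniteDimensional k N₁) (h₂ : FiniteDimensional k N₂) :
    FiniteDimensional k ↥(N₁ ⊔ N₂) := by
  apply fd_of_rs
  have hrs : (N₁ ⊔ N₂).restrictScalars k = N₁.restrictScalars k ⊔ N₂.restrictScalars k := by
    apply le_antisymm
    · intro x hx
      rw [Submodule.restrictScalars_mem, Submodule.mem_sup] at hx
      obtain ⟨a, ha, b, hb, rfl⟩ := hx
      exact Submodule.add_mem_sup ha hb
    · exact sup_le (fun x hx => Submodule.mem_sup_left hx)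
        (fun x hx => Submodule.mem_sup_right hx)
  rw [hrs]
  have := rs_of_fd (k := k) N₁ h₁
  have := rs_of_fd (k := k) N₂ h₂
  exact Submodule.finiteDimensional_sup _ _

private lemma mem_torsionSub' {X : Type} [AddCommGroup X] [Module Rᵐᵒᵖ X] [Module k X]
    [IsScalarTower k Rᵐᵒᵖ X] {x : X}
    (hx : x ∈ sSup {N : Submodule Rᵐᵒᵖ X | FiniteDimensional k N}) :
    ∃ N : Submodule Rᵐᵒᵖ X, FiniteDimensional k N ∧ x ∈ N := by
  have hdir : DirectedOn (· ≤ ·) {N : Submodule Rᵐᵒᵖ X | FiniteDimensional k N} := by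
    intro a ha b hb
    exact ⟨a ⊔ b, fd_sup a b ha hb, le_sup_left, le_sup_right⟩
  have hne : {N : Submodule Rᵐᵒᵖ X | FiniteDimensional k N}.Nonempty := by
    refine ⟨⊥, ?_⟩
    apply fd_of_rs
    have : (⊥ : Submodule Rᵐᵒᵖ X).restrictScalars k = ⊥ := rfl
    rw [this]; infer_instance
  rw [Submodule.mem_sSup_of_directed hne hdir] at hx
  obtain ⟨N, hN, hxN⟩ := hx
  exact ⟨N, hN, hxN⟩

private lemma fd_comap {X Y : Type} [AddCommGroup X] [Module Rᵐᵒᵖ X] [Module k X]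
    [IsScalarTower k Rᵐᵒᵖ X] [AddCommGroup Y] [Module Rᵐᵒᵖ Y] [Module k Y]
    [IsScalarTower k Rᵐᵒᵖ Y] (f : X →ₗ[Rᵐᵒᵖ] Y) (hf : Function.Injective f)
    (N : Submodule Rᵐᵒᵖ Y) (hN : FiniteDimensional k N) :
    FiniteDimensional k ↥(N.comap f) := by
  apply fd_of_rs
  have hN' := rs_of_fd (k := k) N hN
  let g : ↥((N.comap f).restrictScalars k) →ₗ[k] ↥(N.restrictScalars k) :=
    ((f.restrictScalars k).restrict (p := (N.comap f).restrictScalars k)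
      (q := N.restrictScalars k) (fun x hx => hx))
  have hg : Function.Injective g := fun a b hab => by
    apply Subtype.ext; apply hf
    exact congrArg Subtype.val hab
  exact FiniteDimensional.of_injective g hg

private lemma fd_range {S Y : Type} [AddCommGroup S] [Module Rᵐᵒᵖ S] [Module k S]
    [IsScalarTower k Rᵐᵒᵖ S] [AddCommGroup Y] [Module Rᵐᵒᵖ Y] [Module k Y]
    [IsScalarTower k Rᵐᵒᵖ Y] (f : S →ₗ[Rᵐᵒᵖ] Y) (hS : FiniteDimensional k S) :
    FiniteDimensional k ↥(LinearMap.range f) := by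
  apply fd_of_rs
  have : (LinearMap.range f).restrictScalars k = LinearMap.range (f.restrictScalars k) := rfl
  rw [this]
  infer_instance

end helpers


/-- The largest torsion submodule of a right `R`-module `X`: the sum of all
finite-dimensional submodules (a module is torsion when every cyclic submodule is
finite-dimensional over `k`). -/
def torsionSub (k R X : Type) [Field k] [Ring R] [Algebra k R]
    [AddCommGroup X] [Module Rᵐᵒᵖ X] [Module k X] [IsScalarTower k Rᵐᵒᵖ X] :
    Submodule Rᵐᵒᵖ X :=
  sSup {N : Submodule Rᵐᵒᵖ X | FiniteDimensional k N}

/-- Let `R` be a noetherian algebra, `M` a finitely generated right `R`-module with a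
minimal injective resolution `0 → M → I⁰ → I¹ → ⋯` (each `Iⁱ` injective, the resolution
exact, and each image essential in the next term).  If the right derived torsion functors
satisfy `R^i τ(M) = 0` for all `i < d` (expressed by the vanishing of the cohomology of
the complex of torsion submodules `τ(I⁰) → τ(I¹) → ⋯`), then `Iⁱ` is torsion-free for all
`i < d`, and consequently `Ext^i_R(S, M) = 0` for all `i < d` and every finite-dimensional
simple right `R`-module `S` (expressed by the vanishing of the cohomology of
`Hom(S, I⁰) → Hom(S, I¹) → ⋯`). -/
theorem minimal_injective_resolution_torsionFree_and_ext_vanishing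
    (k R : Type) [Field k] [CharZero k] [Ring R] [Algebra k R]
    [IsNoetherianRing R] [IsNoetherianRing Rᵐᵒᵖ]
    (M : Type) [AddCommGroup M] [Module Rᵐᵒᵖ M] [Module k M] [IsScalarTower k Rᵐᵒᵖ M]
    [Module.Finite Rᵐᵒᵖ M]
    (I : ℕ → Type) [∀ n, AddCommGroup (I n)] [∀ n, Module Rᵐᵒᵖ (I n)]
    [∀ n, Module k (I n)] [∀ n, IsScalarTower k Rᵐᵒᵖ (I n)]
    (hinj : ∀ n, Module.Injective Rᵐᵒᵖ (I n))
    (ι : M →ₗ[Rᵐᵒᵖ] I 0) (dm : ∀ n, I n →ₗ[Rᵐᵒᵖ] I (n + 1))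
    (hι : Function.Injective ι)
    (hex0 : LinearMap.range ι = LinearMap.ker (dm 0))
    (hex : ∀ n, LinearMap.range (dm n) = LinearMap.ker (dm (n + 1)))
    (hmin0 : ∀ P : Submodule Rᵐᵒᵖ (I 0), P ≠ ⊥ → LinearMap.range ι ⊓ P ≠ ⊥)
    (hmin : ∀ n, ∀ P : Submodule Rᵐᵒᵖ (I (n + 1)), P ≠ ⊥ →
      LinearMap.range (dm n) ⊓ P ≠ ⊥)
    (d : ℕ)
    (hτ0 : 0 < d → torsionSub k R M = ⊥)
    (hτ : ∀ i : ℕ, i + 1 < d →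
      torsionSub k R (I (i + 1)) ⊓ LinearMap.ker (dm (i + 1)) ≤
        Submodule.map (dm i) (torsionSub k R (I i))) :
    (∀ i < d, torsionSub k R (I i) = ⊥) ∧
    (∀ (S : Type) [AddCommGroup S] [Module Rᵐᵒᵖ S] [Module k S]
        [IsScalarTower k Rᵐᵒᵖ S], IsSimpleModule Rᵐᵒᵖ S → FiniteDimensional k S →
      ((0 < d → ∀ f : S →ₗ[Rᵐᵒᵖ] I 0, (dm 0).comp f = 0 → f = 0) ∧
       (∀ i : ℕ, i + 1 < d → ∀ f : S →ₗ[Rᵐᵒᵖ] I (i + 1), (dm (i + 1)).comp f = 0 →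
          ∃ g : S →ₗ[Rᵐᵒᵖ] I i, f = (dm i).comp g))) := by
  have tf : ∀ i < d, torsionSub k R (I i) = ⊥ := by
    intro i
    induction i with
    | zero =>
      intro hd
      by_contra hne
      obtain ⟨x, hx, hxι⟩ := Submodule.exists_mem_ne_zero_of_ne_bot (hmin0 _ hne)
      obtain ⟨hxr, hxτ⟩ := hx
      obtain ⟨N, hN, hxN⟩ := mem_torsionSub' (k := k) hxτ
      obtain ⟨m, rfl⟩ := hxr
      have hm : m ≠ 0 := fun h => hxι (by rw [h, map_zero])
      have hfd : FiniteDimensional k ↥(N.comap ι) := fd_comap ι hι N hN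
      have hle : N.comap ι ≤ torsionSub k R M := le_sSup hfd
      have : m ∈ torsionSub k R M := hle hxN
      rw [hτ0 hd] at this
      exact hm this
    | succ i ih =>
      intro hd
      by_contra hne
      obtain ⟨x, hx, hxz⟩ := Submodule.exists_mem_ne_zero_of_ne_bot (hmin i _ hne)
      obtain ⟨hxr, hxτ⟩ := hx
      have hxk : x ∈ LinearMap.ker (dm (i + 1)) := (hex i) ▸ hxr
      have := hτ i hd ⟨hxτ, hxk⟩
      rw [ih (Nat.lt_of_succ_lt hd), Submodule.map_bot, Submodule.mem_bot] at this
      exact hxz this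
  refine ⟨tf, ?_⟩
  intro S _ _ _ _ _ hfdS
  constructor
  · intro hd f _
    have hr : LinearMap.range f ≤ torsionSub k R (I 0) := le_sSup (fd_range f hfdS)
    rw [tf 0 hd] at hr
    exact LinearMap.range_eq_bot.mp (le_bot_iff.mp hr)
  · intro i hd f _
    have hr : LinearMap.range f ≤ torsionSub k R (I (i + 1)) := le_sSup (fd_range f hfdS)
    rw [tf (i + 1) hd] at hr
    have hf : f = 0 := LinearMap.range_eq_bot.mp (le_bot_iff.mp hr)
    exact ⟨0, by rw [hf]; ext x; simp⟩
end
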